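/- There is a constant K such that for all integers n, m, s ≥ 1 and every satisfiable CNF formula F with n variables and m clauses, there exists a Resolution refutation of RREF(F,s) of length at most K·(snm)^2. -/

import Mathlib

/-! ## Clauses, CNFs and Resolution -/

/-- A clause over variables of type `α`: a finite set of literals `(x, b)`,
where `(x, true)` is the positive literal `X` and `(x, false)` is `¬X`. -/
abbrev Clause (α : Type) := Finset (α × Bool)

/-- A clause is non-tautological if it contains no variable together with its negation. -/
def Clause.Nontaut {α : Type} (C : Clause α) : Prop :=
  ∀ x : α, ¬((x, true) ∈ C ∧ (x, false) ∈ C)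

/-- A Resolution refutation of the set of clauses `F`: a nonempty sequence of
non-tautological clauses, each of which is a weakening (i.e. a superset) of a clause
of `F`, or a weakening of a resolvent `(D_v ∖ {X}) ∪ (D_w ∖ {¬X})` of two earlier
clauses `D_v, D_w` with `X ∈ D_v` and `¬X ∈ D_w`; the last clause is empty.
The length of the refutation is the length of the list. -/
def IsResRefutation {α : Type} [DecidableEq α] (F : Set (Clause α)) (P : List (Clause α)) : Prop :=
  P ≠ [] ∧
  (∀ u : Fin P.length,
      Clause.Nontaut (P.get u) ∧
      ((∃ C ∈ F, C ⊆ P.get u) ∨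
        ∃ v w : Fin P.length, (v : ℕ) < (u : ℕ) ∧ (w : ℕ) < (u : ℕ) ∧ ∃ x : α,
          (x, true) ∈ P.get v ∧ (x, false) ∈ P.get w ∧
          ((P.get v).erase (x, true) ∪ (P.get w).erase (x, false)) ⊆ P.get u)) ∧
  P.getLast? = some (∅ : Clause α)

/-- Satisfiability of a set of clauses. -/
def CnfSat {α : Type} (S : Set (Clause α)) : Prop :=
  ∃ a : α → Bool, ∀ C ∈ S, ∃ l ∈ C, a l.1 = l.2

/-- The size of a CNF: the sum of the sizes (numbers of literals) of its clauses. -/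
noncomputable def cnfSize {α : Type} (S : Set (Clause α)) : ℕ :=
  ∑ᶠ C ∈ S, Finset.card C

/-! ## Restrictions (partial assignments) -/

/-- The restriction (partial assignment) `ρ` satisfies the clause `C` (i.e. `C↾ρ = 1`). -/
def Clause.SatByR {α : Type} (ρ : α → Option Bool) (C : Clause α) : Prop :=
  ∃ l ∈ C, ρ l.1 = some l.2

/-- The restriction `ρ` falsifies the clause `C` (i.e. `C↾ρ = 0`). -/
def Clause.FalsByR {α : Type} (ρ : α → Option Bool) (C : Clause α) : Prop :=
  ∀ l ∈ C, ρ l.1 = some (!l.2)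

/-- The clause `C↾ρ` (relevant when `C` is neither satisfied nor falsified):
remove from `C` all falsified literals. -/
def Clause.restrictBy {α : Type} [DecidableEq α] (ρ : α → Option Bool) (C : Clause α) :
    Clause α :=
  C.filter (fun l => ρ l.1 ≠ some (!l.2))

/-- `F↾ρ` for a set of clauses `F`: it contains `C↾ρ` for those `C ∈ F` neither satisfied
nor falsified by `ρ`, together with the empty clause if some `C ∈ F` is falsified by `ρ`. -/
def cnfRestrict {α : Type} [DecidableEq α] (ρ : α → Option Bool) (S : Set (Clause α)) :
    Set (Clause α) :=
  { E | ∃ C ∈ S, ¬Clause.SatByR ρ C ∧ ¬Clause.FalsByR ρ C ∧ E = Clause.restrictBy ρ C } ∪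
  { E | E = (∅ : Clause α) ∧ ∃ C ∈ S, Clause.FalsByR ρ C }

open scoped Classical in
/-- `Π↾ρ` for a sequence of clauses: remove the satisfied clauses (the `1`s) and replace
the falsified ones (the `0`s) by the empty clause. -/
noncomputable def seqRestrict {α : Type} [DecidableEq α] (ρ : α → Option Bool)
    (P : List (Clause α)) : List (Clause α) :=
  (P.filter (fun C => decide (¬Clause.SatByR ρ C))).map
    (fun C => if Clause.FalsByR ρ C then (∅ : Clause α) else Clause.restrictBy ρ C)

/-- The partial assignment `σ` extends the partial assignment `ρ`. -/
def optExtends {α : Type} (ρ σ : α → Option Bool) : Prop :=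
  ∀ x b, ρ x = some b → σ x = some b

/-! ## CNFs with an explicit enumeration of clauses -/

/-- A CNF formula with variables `X_1, …, X_n` (indices in `Finset.Icc 1 n`) given with an
explicit enumeration `Cl 1, …, Cl m` of its clauses. -/
structure CNFFam where
  n : ℕ
  m : ℕ
  Cl : ℕ → Clause ℕ

namespace CNFFam

/-- Well-formedness: the clauses `C_1, …, C_m` are non-tautological, pairwise distinct
(they enumerate a set of clauses), and use only the variables `X_1, …, X_n`. -/
def WF (F : CNFFam) : Prop :=
  (∀ j ∈ Finset.Icc 1 F.m, Clause.Nontaut (F.Cl j) ∧ ∀ l ∈ F.Cl j, l.1 ∈ Finset.Icc 1 F.n) ∧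
  (∀ j ∈ Finset.Icc 1 F.m, ∀ j' ∈ Finset.Icc 1 F.m, F.Cl j = F.Cl j' → j = j')

/-- The underlying set of clauses. -/
def clauseSet (F : CNFFam) : Set (Clause ℕ) :=
  { C | ∃ j ∈ Finset.Icc 1 F.m, C = F.Cl j }

/-- `F` is satisfiable. -/
def Sat (F : CNFFam) : Prop := CnfSat F.clauseSet

/-- `F` is a 3-CNF: all clauses have size at most 3. -/
def Is3CNF (F : CNFFam) : Prop := ∀ j ∈ Finset.Icc 1 F.m, (F.Cl j).card ≤ 3

end CNFFam

/-! ## The variables of the formulas REF and RREF -/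

/-- The propositional variables of `REF(F,s)` and `RREF(F,s)`. -/
inductive RefVar : Type where
  | D (u i : ℕ) (b : Bool)
  | V (u i : ℕ)
  | I (u j : ℕ)
  | L (u v : ℕ)
  | R (u v : ℕ)
  | P (u : ℕ)
deriving DecidableEq

abbrev VClause := Clause RefVar

/-- The index mentioned by a variable: `D[u,i,b], V[u,i], I[u,j], L[u,v], R[u,v], P[u]`
all mention the index `u`. -/
def RefVar.idx : RefVar → ℕ
  | .D u _ _ => u
  | .V u _ => u
  | .I u _ => u
  | .L u _ => u
  | .R u _ => u
  | .P u => u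

/-- The positive literal on a variable. -/
def pLit (x : RefVar) : RefVar × Bool := (x, true)

/-- The negative literal on a variable. -/
def nLit (x : RefVar) : RefVar × Bool := (x, false)

/-- The index-width of a clause: the number of indices mentioned by its variables. -/
def idxWidth (C : VClause) : ℕ := (C.image (fun l => RefVar.idx l.1)).card

/-! ## The clauses of REF and RREF -/

namespace Ref

/-- (A1) `V[u,0] ∨ V[u,1] ∨ ⋯ ∨ V[u,n]`. -/
def A1 (F : CNFFam) (A : Finset ℕ) : Set VClause :=
  { C | ∃ u ∈ A, C = (Finset.range (F.n + 1)).image (fun i => pLit (.V u i)) }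

/-- (A2) `I[u,0] ∨ I[u,1] ∨ ⋯ ∨ I[u,m]`. -/
def A2 (F : CNFFam) (A : Finset ℕ) : Set VClause :=
  { C | ∃ u ∈ A, C = (Finset.range (F.m + 1)).image (fun j => pLit (.I u j)) }

/-- (A3) `L[u,0] ∨ L[u,1] ∨ ⋯ ∨ L[u,s]` (disjunction over the index set and 0). -/
def A3 (A : Finset ℕ) : Set VClause :=
  { C | ∃ u ∈ A, C = (insert 0 A).image (fun v => pLit (.L u v)) }

/-- (A4) `R[u,0] ∨ R[u,1] ∨ ⋯ ∨ R[u,s]`. -/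
def A4 (A : Finset ℕ) : Set VClause :=
  { C | ∃ u ∈ A, C = (insert 0 A).image (fun v => pLit (.R u v)) }

/-- (A5) `¬V[u,i] ∨ ¬V[u,i']`, `i ≠ i'`. -/
def A5 (F : CNFFam) (A : Finset ℕ) : Set VClause :=
  { C | ∃ u ∈ A, ∃ i ∈ Finset.range (F.n + 1), ∃ i' ∈ Finset.range (F.n + 1),
      i ≠ i' ∧ C = {nLit (.V u i), nLit (.V u i')} }

/-- (A6) `¬I[u,j] ∨ ¬I[u,j']`, `j ≠ j'`. -/
def A6 (F : CNFFam) (A : Finset ℕ) : Set VClause :=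
  { C | ∃ u ∈ A, ∃ j ∈ Finset.range (F.m + 1), ∃ j' ∈ Finset.range (F.m + 1),
      j ≠ j' ∧ C = {nLit (.I u j), nLit (.I u j')} }

/-- (A7) `¬L[u,v] ∨ ¬L[u,v']`, `v ≠ v'`. -/
def A7 (A : Finset ℕ) : Set VClause :=
  { C | ∃ u ∈ A, ∃ v ∈ insert 0 A, ∃ v' ∈ insert 0 A,
      v ≠ v' ∧ C = {nLit (.L u v), nLit (.L u v')} }

/-- (A8) `¬R[u,v] ∨ ¬R[u,v']`, `v ≠ v'`. -/
def A8 (A : Finset ℕ) : Set VClause :=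
  { C | ∃ u ∈ A, ∃ v ∈ insert 0 A, ∃ v' ∈ insert 0 A,
      v ≠ v' ∧ C = {nLit (.R u v), nLit (.R u v')} }

/-- (A9) `¬I[u,0] ∨ ¬V[u,0]`. -/
def A9 (A : Finset ℕ) : Set VClause := { C | ∃ u ∈ A, C = {nLit (.I u 0), nLit (.V u 0)} }

/-- (A10) `I[u,0] ∨ V[u,0]`. -/
def A10 (A : Finset ℕ) : Set VClause := { C | ∃ u ∈ A, C = {pLit (.I u 0), pLit (.V u 0)} }

/-- (A11) `¬I[u,0] ∨ ¬L[u,0]`. -/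
def A11 (A : Finset ℕ) : Set VClause := { C | ∃ u ∈ A, C = {nLit (.I u 0), nLit (.L u 0)} }

/-- (A12) `¬I[u,0] ∨ ¬R[u,0]`. -/
def A12 (A : Finset ℕ) : Set VClause := { C | ∃ u ∈ A, C = {nLit (.I u 0), nLit (.R u 0)} }

/-- (A13) `¬L[u,v]` for `u ≤ v`. -/
def A13 (A : Finset ℕ) : Set VClause :=
  { C | ∃ u ∈ A, ∃ v ∈ A, u ≤ v ∧ C = {nLit (.L u v)} }

/-- (A14) `¬R[u,v]` for `u ≤ v`. -/
def A14 (A : Finset ℕ) : Set VClause :=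
  { C | ∃ u ∈ A, ∃ v ∈ A, u ≤ v ∧ C = {nLit (.R u v)} }

/-- (A15) `¬L[u,v] ∨ ¬V[u,i] ∨ D[v,i,0]`. -/
def A15 (F : CNFFam) (A : Finset ℕ) : Set VClause :=
  { C | ∃ u ∈ A, ∃ v ∈ A, ∃ i ∈ Finset.Icc 1 F.n,
      C = {nLit (.L u v), nLit (.V u i), pLit (.D v i false)} }

/-- (A16) `¬R[u,v] ∨ ¬V[u,i] ∨ D[v,i,1]`. -/
def A16 (F : CNFFam) (A : Finset ℕ) : Set VClause :=
  { C | ∃ u ∈ A, ∃ v ∈ A, ∃ i ∈ Finset.Icc 1 F.n,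
      C = {nLit (.R u v), nLit (.V u i), pLit (.D v i true)} }

/-- (A17) `¬L[u,v] ∨ ¬V[u,i] ∨ ¬D[v,i',b] ∨ D[u,i',b]`, `i' ≠ i`. -/
def A17 (F : CNFFam) (A : Finset ℕ) : Set VClause :=
  { C | ∃ u ∈ A, ∃ v ∈ A, ∃ i ∈ Finset.Icc 1 F.n, ∃ i' ∈ Finset.Icc 1 F.n, ∃ b : Bool,
      i' ≠ i ∧ C = {nLit (.L u v), nLit (.V u i), nLit (.D v i' b), pLit (.D u i' b)} }

/-- (A18) `¬R[u,v] ∨ ¬V[u,i] ∨ ¬D[v,i',b] ∨ D[u,i',b]`, `i' ≠ i`. -/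
def A18 (F : CNFFam) (A : Finset ℕ) : Set VClause :=
  { C | ∃ u ∈ A, ∃ v ∈ A, ∃ i ∈ Finset.Icc 1 F.n, ∃ i' ∈ Finset.Icc 1 F.n, ∃ b : Bool,
      i' ≠ i ∧ C = {nLit (.R u v), nLit (.V u i), nLit (.D v i' b), pLit (.D u i' b)} }

/-- (A19) `¬I[u,j] ∨ D[u,i,b]` for `X_i^{(b)} ∈ C_j`. -/
def A19 (F : CNFFam) (A : Finset ℕ) : Set VClause :=
  { C | ∃ u ∈ A, ∃ j ∈ Finset.Icc 1 F.m, ∃ i : ℕ, ∃ b : Bool,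
      (i, b) ∈ F.Cl j ∧ C = {nLit (.I u j), pLit (.D u i b)} }

/-- (A20) `¬D[u,i,0] ∨ ¬D[u,i,1]`. -/
def A20 (F : CNFFam) (A : Finset ℕ) : Set VClause :=
  { C | ∃ u ∈ A, ∃ i ∈ Finset.Icc 1 F.n, C = {nLit (.D u i false), nLit (.D u i true)} }

/-- (A21) `¬D[s,i,b]` (for the last index `t`). -/
def A21 (F : CNFFam) (t : ℕ) : Set VClause :=
  { C | ∃ i ∈ Finset.Icc 1 F.n, ∃ b : Bool, C = {nLit (.D t i b)} }

/-- (A22) `¬P[u] ∨ ¬L[u,v] ∨ P[v]`. -/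
def A22 (A : Finset ℕ) : Set VClause :=
  { C | ∃ u ∈ A, ∃ v ∈ A, C = {nLit (.P u), nLit (.L u v), pLit (.P v)} }

/-- (A23) `¬P[u] ∨ ¬R[u,v] ∨ P[v]`. -/
def A23 (A : Finset ℕ) : Set VClause :=
  { C | ∃ u ∈ A, ∃ v ∈ A, C = {nLit (.P u), nLit (.R u v), pLit (.P v)} }

/-- (A24) `P[s]` (for the last index `t`). -/
def A24 (t : ℕ) : Set VClause := { C | C = {pLit (.P t)} }

end Ref

/-- The formula `REF(F, A)` with index set `A` (in place of `[s]`) and last index `t`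
(in the role of `s`): the clauses (A1)–(A21). -/
def REFA (F : CNFFam) (A : Finset ℕ) (t : ℕ) : Set VClause :=
  Ref.A1 F A ∪ Ref.A2 F A ∪ Ref.A3 A ∪ Ref.A4 A ∪ Ref.A5 F A ∪ Ref.A6 F A ∪
    Ref.A7 A ∪ Ref.A8 A ∪ Ref.A9 A ∪ Ref.A10 A ∪ Ref.A11 A ∪ Ref.A12 A ∪ Ref.A13 A ∪
    Ref.A14 A ∪ Ref.A15 F A ∪ Ref.A16 F A ∪ Ref.A17 F A ∪ Ref.A18 F A ∪ Ref.A19 F A ∪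
    Ref.A20 F A ∪ Ref.A21 F t

/-- The formula `REF(F, s)`. -/
def REF (F : CNFFam) (s : ℕ) : Set VClause := REFA F (Finset.Icc 1 s) s

/-- Relativization of a clause: add the literal `¬P[u]` for every index `u` mentioned
by a variable occurring in the clause. -/
def relCl (C : VClause) : VClause :=
  C ∪ (C.image (fun l => RefVar.idx l.1)).image (fun u => nLit (.P u))

/-- The formula `RREF(F, s)`: the relativized clauses of `REF(F,s)` together with the
clauses (A22), (A23) and (A24). -/
def RREF (F : CNFFam) (s : ℕ) : Set VClause :=
  (relCl '' REF F s) ∪ Ref.A22 (Finset.Icc 1 s) ∪ Ref.A23 (Finset.Icc 1 s) ∪ Ref.A24 s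

/-- `REF(F,s)` with the clauses of types (A7) and (A8) deleted. -/
def REFnoLR (F : CNFFam) (s : ℕ) : Set VClause :=
  Ref.A1 F (Finset.Icc 1 s) ∪ Ref.A2 F (Finset.Icc 1 s) ∪ Ref.A3 (Finset.Icc 1 s) ∪
    Ref.A4 (Finset.Icc 1 s) ∪ Ref.A5 F (Finset.Icc 1 s) ∪ Ref.A6 F (Finset.Icc 1 s) ∪
    Ref.A9 (Finset.Icc 1 s) ∪ Ref.A10 (Finset.Icc 1 s) ∪ Ref.A11 (Finset.Icc 1 s) ∪
    Ref.A12 (Finset.Icc 1 s) ∪ Ref.A13 (Finset.Icc 1 s) ∪ Ref.A14 (Finset.Icc 1 s) ∪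
    Ref.A15 F (Finset.Icc 1 s) ∪ Ref.A16 F (Finset.Icc 1 s) ∪ Ref.A17 F (Finset.Icc 1 s) ∪
    Ref.A18 F (Finset.Icc 1 s) ∪ Ref.A19 F (Finset.Icc 1 s) ∪ Ref.A20 F (Finset.Icc 1 s) ∪
    Ref.A21 F s

/-- `RREF'(F,s)`: obtained from `RREF(F,s)` by deleting the (relativized) clauses of
types (A7) and (A8). -/
def RREF' (F : CNFFam) (s : ℕ) : Set VClause :=
  (relCl '' REFnoLR F s) ∪ Ref.A22 (Finset.Icc 1 s) ∪ Ref.A23 (Finset.Icc 1 s) ∪ Ref.A24 s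

/-! ## Refutations as structures -/

/-- A structure `(D, V, I, L, R)` of the type of a length-`s` refutation. -/
structure RefStruct where
  Dr : ℕ → ℕ → Bool → Bool
  Vf : ℕ → ℕ
  If' : ℕ → ℕ
  Lf : ℕ → ℕ
  Rf : ℕ → ℕ

namespace RefStruct

/-- The typing conditions: `D ⊆ [s]×[n]×B`, `V : [s] → [n]∪{0}`, `I : [s] → [m]∪{0}`,
`L, R : [s] → [s]∪{0}`. -/
def WFOn (M : RefStruct) (s n m : ℕ) : Prop :=
  (∀ u i b, M.Dr u i b = true → u ∈ Finset.Icc 1 s ∧ i ∈ Finset.Icc 1 n) ∧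
  (∀ u ∈ Finset.Icc 1 s, M.Vf u ≤ n) ∧
  (∀ u ∈ Finset.Icc 1 s, M.If' u ≤ m) ∧
  (∀ u ∈ Finset.Icc 1 s, M.Lf u ≤ s) ∧
  (∀ u ∈ Finset.Icc 1 s, M.Rf u ≤ s)

/-- (R1)–(R8): the structure is a refutation of `F` of length `s`. -/
def IsRefutationOf (M : RefStruct) (F : CNFFam) (s : ℕ) : Prop :=
  ∀ u ∈ Finset.Icc 1 s,
    ((M.Vf u = 0 ∨ M.If' u = 0) ∧ ¬(M.Vf u = 0 ∧ M.If' u = 0)) ∧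
    (M.If' u = 0 → M.Lf u ≠ 0 ∧ M.Rf u ≠ 0) ∧
    (M.Lf u < u ∧ M.Rf u < u) ∧
    (∀ i ∈ Finset.Icc 1 F.n, ∀ v ∈ Finset.Icc 1 s,
      (M.Vf u = i → M.Lf u = v → M.Dr v i false = true) ∧
      (M.Vf u = i → M.Rf u = v → M.Dr v i true = true) ∧
      (∀ i' ∈ Finset.Icc 1 F.n, ∀ b : Bool,
        M.Vf u = i → i ≠ i' → M.Lf u = v → M.Dr v i' b = true → M.Dr u i' b = true) ∧
      (∀ i' ∈ Finset.Icc 1 F.n, ∀ b : Bool,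
        M.Vf u = i → i ≠ i' → M.Rf u = v → M.Dr v i' b = true → M.Dr u i' b = true)) ∧
    (∀ j ∈ Finset.Icc 1 F.m, ∀ i : ℕ, ∀ b : Bool,
      M.If' u = j → (i, b) ∈ F.Cl j → M.Dr u i b = true) ∧
    (∀ i ∈ Finset.Icc 1 F.n, ¬(M.Dr u i false = true ∧ M.Dr u i true = true)) ∧
    (∀ i ∈ Finset.Icc 1 F.n, ∀ b : Bool, M.Dr s i b = false)

/-- The truth assignment associated to a structure. -/
def assign (M : RefStruct) : RefVar → Bool
  | .D u i b => M.Dr u i b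
  | .V u i => M.Vf u == i
  | .I u j => M.If' u == j
  | .L u v => M.Lf u == v
  | .R u v => M.Rf u == v
  | .P _ => true

end RefStruct

/-! ## The full-tree refutation -/

/-- The level `h` of the node numbered `u` in the full binary tree with `n+1` levels. -/
def levelOf (n u : ℕ) : ℕ := Nat.log 2 (2 ^ (n + 1) - u)

/-- The value (position within its level, `a₁` most significant) of the node numbered `u`. -/
def valOf (n u : ℕ) : ℕ := u - (2 ^ (n + 1) + 1 - 2 ^ (levelOf n u + 1))

/-- The `i`-th bit `a_i` of the binary string `a` labelling the node numbered `u`. -/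
def digitOf (n u i : ℕ) : Bool := (valOf n u).testBit (levelOf n u - i)

/-- The clause `C_a = X_1^{(a_1)} ∨ ⋯ ∨ X_n^{(a_n)}` labelling the leaf numbered `u`. -/
def leafClause (F : CNFFam) (u : ℕ) : Clause ℕ :=
  (Finset.Icc 1 F.n).image (fun i => (i, digitOf F.n u i))

/-- The full-tree Resolution refutation `(D*, V*, I*, L*, R*)` of `F`,
of length `s* = 2^{n+1} - 1`. -/
noncomputable def fullTree (F : CNFFam) : RefStruct where
  Dr := fun u i b =>
    decide (1 ≤ u ∧ u ≤ 2 ^ (F.n + 1) - 1 ∧ 1 ≤ i ∧ i ≤ levelOf F.n u) &&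
      (digitOf F.n u i == b)
  Vf := fun u =>
    if 1 ≤ u ∧ u ≤ 2 ^ (F.n + 1) - 1 ∧ levelOf F.n u < F.n then levelOf F.n u + 1 else 0
  If' := fun u =>
    if 1 ≤ u ∧ u ≤ 2 ^ (F.n + 1) - 1 ∧ levelOf F.n u = F.n then
      sInf { j : ℕ | j ∈ Finset.Icc 1 F.m ∧ F.Cl j ⊆ leafClause F u }
    else 0
  Lf := fun u =>
    if 1 ≤ u ∧ u ≤ 2 ^ (F.n + 1) - 1 ∧ levelOf F.n u < F.n then
      2 ^ (F.n + 1) + 1 + 2 * valOf F.n u - 2 ^ (levelOf F.n u + 2)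
    else 0
  Rf := fun u =>
    if 1 ≤ u ∧ u ≤ 2 ^ (F.n + 1) - 1 ∧ levelOf F.n u < F.n then
      2 ^ (F.n + 1) + 2 + 2 * valOf F.n u - 2 ^ (levelOf F.n u + 2)
    else 0

/-! ## Blocks, the family 𝓗, and conditions -/

/-- The integer `k` with `2^k < 3w ≤ 2^{k+1}`. -/
def kOf (w : ℕ) : ℕ := Nat.log 2 (3 * w - 1)

/-- The block `B*_i` of `[s*]`, `s* = 2^{n+1} - 1`. -/
def Bstar (n w i : ℕ) : Finset ℕ :=
  let s' := 2 ^ (n + 1) - 1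
  let k := kOf w
  if i = 0 then Finset.Icc (s' - 2 ^ (k + 1) + 2) s'
  else Finset.Icc (s' + 2 - 2 ^ (k + 1 + i)) (s' - 2 ^ (k + i) + 1)

/-- The block `B_i` of `[s]`. -/
def Bblk (n s w i : ℕ) : Finset ℕ :=
  let k := kOf w
  if i = 0 then Finset.Icc (s - 2 ^ (k + 1) + 2) s
  else if i = n - k then Finset.Icc 1 (s - 2 ^ (k + 1) * (n - k) + 1)
  else Finset.Icc (s - 2 ^ (k + 1) * (i + 1) + 2) (s - 2 ^ (k + 1) * i + 1)

/-- The bijection `t : B_0 → B*_0`, `t(u) = u - s + s*`. -/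
def tmap (n s u : ℕ) : ℕ := u + (2 ^ (n + 1) - 1 - s)

/-- `h` (a set of pairs) is a partial function. -/
def pfun (h : Finset (ℕ × ℕ)) : Prop :=
  ∀ p ∈ h, ∀ q ∈ h, p.1 = q.1 → p.2 = q.2

/-- The domain of a partial function given as a set of pairs. -/
def pdom (h : Finset (ℕ × ℕ)) : Finset ℕ := h.image Prod.fst

/-- The image of a partial function given as a set of pairs. -/
def pimg (h : Finset (ℕ × ℕ)) : Finset ℕ := h.image Prod.snd

/-- Membership in the family `𝓗`: injective partial functions
`h : [s]∪{0} → [s*]∪{0}` satisfying (H1)–(H4). -/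
def memH (n s w : ℕ) (h : Finset (ℕ × ℕ)) : Prop :=
  pfun h ∧
  (∀ p ∈ h, p.1 ∈ insert 0 (Finset.Icc 1 s) ∧
    p.2 ∈ insert 0 (Finset.Icc 1 (2 ^ (n + 1) - 1))) ∧
  (∀ p ∈ h, ∀ q ∈ h, p.2 = q.2 → p.1 = q.1) ∧
  ((0, 0) ∈ h) ∧
  (∀ p ∈ h, p.1 ∈ Bblk n s w 0 → p.2 = tmap n s p.1) ∧
  (∀ p ∈ h, ∀ i ∈ Finset.Icc 1 (n - kOf w), p.1 ∈ Bblk n s w i → p.2 ∈ Bstar n w i)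

/-- `∂I = {L*(u) | u ∈ I∖{0}} ∪ {R*(u) | u ∈ I∖{0}}`. -/
noncomputable def bnd (F : CNFFam) (I : Finset ℕ) : Finset ℕ :=
  (I.erase 0).image (fullTree F).Lf ∪ (I.erase 0).image (fullTree F).Rf

/-- A condition: a pair `p = (g, h)` of members of `𝓗` with (C1) `g ⊆ h` and
(C2) `Img(h) = Img(g) ∪ ∂Img(g)`. -/
def IsCond (F : CNFFam) (s w : ℕ) (g h : Finset (ℕ × ℕ)) : Prop :=
  memH F.n s w g ∧ memH F.n s w h ∧ g ⊆ h ∧ pimg h = pimg g ∪ bnd F (pimg g)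

/-- Application of a partial function given as a set of pairs. -/
noncomputable def papp (g : Finset (ℕ × ℕ)) (u : ℕ) : ℕ := sInf { v : ℕ | (u, v) ∈ g }

/-- Inverse application of an (injective) partial function given as a set of pairs. -/
noncomputable def pinv (h : Finset (ℕ × ℕ)) (y : ℕ) : ℕ := sInf { u : ℕ | (u, y) ∈ h }

/-- The partial assignment `α(p)` determined by a condition `p = (g, h)`: it is defined
precisely on the variables (of `REF(F,s)`) mentioning some `u ∈ Dom(g) ∖ {0}`, where it is
read off from the full-tree refutation through `g` (and `h` for the `L`- and `R`-variables). -/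
noncomputable def alphaP (F : CNFFam) (g h : Finset (ℕ × ℕ)) : RefVar → Option Bool :=
  fun x =>
    if RefVar.idx x ∈ (pdom g).erase 0 then
      match x with
      | RefVar.D u i b => some ((fullTree F).assign (RefVar.D (papp g u) i b))
      | RefVar.V u i => some ((fullTree F).assign (RefVar.V (papp g u) i))
      | RefVar.I u j => some ((fullTree F).assign (RefVar.I (papp g u) j))
      | RefVar.L u v => some (decide (v = pinv h ((fullTree F).Lf (papp g u))))
      | RefVar.R u v => some (decide (v = pinv h ((fullTree F).Rf (papp g u))))
      | RefVar.P _ => none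
    else none

open scoped Classical in
/-- The restriction `p↾I` of a condition `p = (g,h)`: `g'` is the restriction of `g` to
`I ∪ {0}` and `h'` is the restriction of `h` with image `Img(g') ∪ ∂Img(g')`. -/
noncomputable def condRestrict (F : CNFFam) (g h : Finset (ℕ × ℕ)) (I : Finset ℕ) :
    Finset (ℕ × ℕ) × Finset (ℕ × ℕ) :=
  let g' := g.filter (fun p => p.1 ∈ insert 0 I)
  let h' := h.filter (fun p => p.2 ∈ pimg g' ∪ bnd F (pimg g'))
  (g', h')

/-! ## Statement 4 -/
namespace RUB
open Finset

/-- Valid resolution proof sequences (no final-empty requirement). -/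
inductive PF (F : Set VClause) : List VClause → Prop
  | nil : PF F []
  | ax {P : List VClause} {C : VClause} : PF F P → Clause.Nontaut C →
      (∃ A ∈ F, A ⊆ C) → PF F (P ++ [C])
  | res {P : List VClause} {C D₁ D₂ : VClause} {x : RefVar} : PF F P → Clause.Nontaut C →
      D₁ ∈ P → D₂ ∈ P → (x, true) ∈ D₁ → (x, false) ∈ D₂ →
      (D₁.erase (x, true) ∪ D₂.erase (x, false)) ⊆ C → PF F (P ++ [C])

theorem PF.mono {F G : Set VClause} (hFG : F ⊆ G) {P : List VClause} (h : PF F P) : PF G P := by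
  induction h with
  | nil => exact PF.nil
  | ax h₀ hnt hax ih => exact PF.ax ih hnt (by obtain ⟨A, hA, hs⟩ := hax; exact ⟨A, hFG hA, hs⟩)
  | res h₀ hnt h1 h2 h3 h4 h5 ih => exact PF.res ih hnt h1 h2 h3 h4 h5

theorem PF.just {F : Set VClause} {P : List VClause} (h : PF F P) {D : VClause} (hD : D ∈ P) :
    (∃ A ∈ F, A ⊆ D) ∨
      ∃ D₁ ∈ P, ∃ D₂ ∈ P, ∃ x : RefVar, (x, true) ∈ D₁ ∧ (x, false) ∈ D₂ ∧
        (D₁.erase (x, true) ∪ D₂.erase (x, false)) ⊆ D := by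
  induction h with
  | nil => simp at hD
  | ax h₀ hnt hax ih =>
    rcases List.mem_append.1 hD with hD | hD
    · rcases ih hD with h | ⟨D₁, h1, D₂, h2, x, hx⟩
      · exact Or.inl h
      · exact Or.inr ⟨D₁, List.mem_append_left _ h1, D₂, List.mem_append_left _ h2, x, hx⟩
    · simp only [List.mem_singleton] at hD; subst hD; exact Or.inl hax
  | @res P C D₁ D₂ x h₀ hnt h1 h2 h3 h4 h5 ih =>
    rcases List.mem_append.1 hD with hD | hD
    · rcases ih hD with h | ⟨E₁, e1, E₂, e2, y, hy⟩
      · exact Or.inl h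
      · exact Or.inr ⟨E₁, List.mem_append_left _ e1, E₂, List.mem_append_left _ e2, y, hy⟩
    · simp only [List.mem_singleton] at hD; subst hD
      exact Or.inr ⟨D₁, List.mem_append_left _ h1, D₂, List.mem_append_left _ h2, x, h3, h4, h5⟩

theorem PF.nontautMem {F : Set VClause} {P : List VClause} (h : PF F P) {D : VClause}
    (hD : D ∈ P) : Clause.Nontaut D := by
  induction h with
  | nil => simp at hD
  | ax h₀ hnt hax ih =>
    rcases List.mem_append.1 hD with hD | hD
    · exact ih hD
    · simp only [List.mem_singleton] at hD; subst hD; exact hnt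
  | res h₀ hnt h1 h2 h3 h4 h5 ih =>
    rcases List.mem_append.1 hD with hD | hD
    · exact ih hD
    · simp only [List.mem_singleton] at hD; subst hD; exact hnt

/-- Weakening of an earlier clause is a legal step. -/
theorem PF.weakMem {F : Set VClause} {P : List VClause} (h : PF F P) {D C : VClause}
    (hD : D ∈ P) (hDC : D ⊆ C) (hC : Clause.Nontaut C) : PF F (P ++ [C]) := by
  rcases h.just hD with ⟨A, hA, hs⟩ | ⟨D₁, h1, D₂, h2, x, h3, h4, h5⟩
  · exact PF.ax h hC ⟨A, hA, hs.trans hDC⟩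
  · exact PF.res h hC h1 h2 h3 h4 (h5.trans hDC)

theorem PF.append {F : Set VClause} {P Q : List VClause} (hP : PF F P)
    (hQ : PF (F ∪ {C | C ∈ P}) Q) : PF F (P ++ Q) := by
  induction hQ with
  | nil => simpa using hP
  | @ax Q₀ C h₀ hnt hax ih =>
    rw [← List.append_assoc]
    obtain ⟨A, hA, hs⟩ := hax
    rcases hA with hA | hA
    · exact PF.ax ih hnt ⟨A, hA, hs⟩
    · exact ih.weakMem (List.mem_append_left _ hA) hs hnt
  | @res Q₀ C D₁ D₂ x h₀ hnt h1 h2 h3 h4 h5 ih =>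
    rw [← List.append_assoc]
    exact PF.res ih hnt (List.mem_append_right _ h1) (List.mem_append_right _ h2) h3 h4 h5

/-- Derivability of `C` from `F` with a proof of length at most `k`. -/
def Dv (F : Set VClause) (k : ℕ) (C : VClause) : Prop :=
  ∃ P : List VClause, PF F P ∧ P.length ≤ k ∧ C ∈ P

theorem Dv.monoK {F : Set VClause} {k k' : ℕ} {C : VClause} (h : Dv F k C) (hk : k ≤ k') :
    Dv F k' C := by obtain ⟨P, h1, h2, h3⟩ := h; exact ⟨P, h1, h2.trans hk, h3⟩

theorem Dv.monoF {F G : Set VClause} (hFG : F ⊆ G) {k : ℕ} {C : VClause} (h : Dv F k C) :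
    Dv G k C := by obtain ⟨P, h1, h2, h3⟩ := h; exact ⟨P, h1.mono hFG, h2, h3⟩

theorem Dv.ax {F : Set VClause} {C : VClause} (hC : Clause.Nontaut C) (h : ∃ A ∈ F, A ⊆ C) :
    Dv F 1 C :=
  ⟨[C], by simpa using PF.ax PF.nil hC h, by simp, by simp⟩

theorem Dv.res {F : Set VClause} {k₁ k₂ : ℕ} {D₁ D₂ C : VClause} {x : RefVar} {b : Bool}
    (h₁ : Dv F k₁ D₁) (h₂ : Dv F k₂ D₂) (m₁ : (x, b) ∈ D₁) (m₂ : (x, !b) ∈ D₂)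
    (s₁ : D₁ ⊆ insert (x, b) C) (s₂ : D₂ ⊆ insert (x, !b) C)
    (hC : Clause.Nontaut C) : Dv F (k₁ + k₂ + 1) C := by
  obtain ⟨P₁, p1, l1, c1⟩ := h₁
  obtain ⟨P₂, p2, l2, c2⟩ := h₂
  have hPP : PF F (P₁ ++ P₂) := PF.append p1 (p2.mono Set.subset_union_left)
  have e1 : D₁.erase (x, b) ⊆ C := by
    intro l hl
    have := s₁ (Finset.mem_of_mem_erase hl)
    rcases Finset.mem_insert.1 this with h | h
    · exact absurd h (Finset.ne_of_mem_erase hl)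
    · exact h
  have e2 : D₂.erase (x, !b) ⊆ C := by
    intro l hl
    have := s₂ (Finset.mem_of_mem_erase hl)
    rcases Finset.mem_insert.1 this with h | h
    · exact absurd h (Finset.ne_of_mem_erase hl)
    · exact h
  refine ⟨(P₁ ++ P₂) ++ [C], ?_, by simp; omega, by simp⟩
  cases b with
  | true =>
    exact PF.res hPP hC (List.mem_append_left _ c1) (List.mem_append_right _ c2) m₁
      (by simpa using m₂) (Finset.union_subset e1 (by simpa using e2))
  | false =>
    exact PF.res hPP hC (List.mem_append_right _ c2) (List.mem_append_left _ c1)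
      (by simpa using m₂) m₁ (Finset.union_subset (by simpa using e2) e1)

open Finset

/-- Generic chain of resolution steps eliminating literals `(x j, true)` from `T j`
down to `T 0`. -/
theorem Dv.chain {F : Set VClause} {c B N : ℕ} {T : ℕ → VClause} {x : ℕ → RefVar}
    (h0 : Dv F B (T N))
    (hnt : ∀ j, j ≤ N → Clause.Nontaut (T j))
    (hQ : ∀ j, 1 ≤ j → j ≤ N → ∃ Q : VClause, Dv F c Q ∧ (x j, false) ∈ Q ∧
        Q ⊆ insert (x j, false) (T (j - 1)))
    (hm : ∀ j, 1 ≤ j → j ≤ N → (x j, true) ∈ T j)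
    (hs : ∀ j, 1 ≤ j → j ≤ N → T j ⊆ insert (x j, true) (T (j - 1))) :
    Dv F (B + N * (c + 1)) (T 0) := by
  have key : ∀ d, d ≤ N → Dv F (B + d * (c + 1)) (T (N - d)) := by
    intro d
    induction d with
    | zero => intro _; simpa using h0
    | succ d ih =>
      intro hd
      have hdN : d ≤ N := Nat.le_of_succ_le hd
      have hprev := ih hdN
      set j := N - d with hj
      have hj1 : 1 ≤ j := by omega
      have hjN : j ≤ N := by omega
      obtain ⟨Q, hQd, hQm, hQs⟩ := hQ j hj1 hjN
      have hres : Dv F (B + d * (c + 1) + c + 1) (T (j - 1)) :=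
        Dv.res hprev hQd (hm j hj1 hjN) (by simpa using hQm) (hs j hj1 hjN)
          (by simpa using hQs) (hnt (j - 1) (by omega))
      have : N - (d + 1) = j - 1 := by omega
      rw [this]
      exact hres.monoK (by ring_nf; omega)
  simpa using key N le_rfl
open Finset

theorem relCl_subset {C T : VClause} (h1 : C ⊆ T)
    (h2 : ∀ l ∈ C, nLit (.P (RefVar.idx l.1)) ∈ T) : relCl C ⊆ T := by
  apply Finset.union_subset h1
  intro l hl
  obtain ⟨u, hu, rfl⟩ := Finset.mem_image.1 hl
  obtain ⟨l', hl', rfl⟩ := Finset.mem_image.1 hu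
  exact h2 l' hl'

theorem relCl_mem_RREF {F : CNFFam} {s : ℕ} {C : VClause} (h : C ∈ REF F s) :
    relCl C ∈ RREF F s :=
  Or.inl (Or.inl (Or.inl ⟨C, h, rfl⟩))

theorem A22_mem_RREF {F : CNFFam} {s u v : ℕ} (hu : u ∈ Finset.Icc 1 s)
    (hv : v ∈ Finset.Icc 1 s) :
    ({nLit (.P u), nLit (.L u v), pLit (.P v)} : VClause) ∈ RREF F s :=
  Or.inl (Or.inl (Or.inr ⟨u, hu, v, hv, rfl⟩))

theorem A23_mem_RREF {F : CNFFam} {s u v : ℕ} (hu : u ∈ Finset.Icc 1 s)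
    (hv : v ∈ Finset.Icc 1 s) :
    ({nLit (.P u), nLit (.R u v), pLit (.P v)} : VClause) ∈ RREF F s :=
  Or.inl (Or.inr ⟨u, hu, v, hv, rfl⟩)

theorem A24_mem_RREF {F : CNFFam} {s : ℕ} : ({pLit (.P s)} : VClause) ∈ RREF F s :=
  Or.inr rfl

/-- Generic availability of a (weakened) relativized `REF` axiom. -/
theorem dv_relax {F : CNFFam} {s : ℕ} {G : Set VClause} (hG : RREF F s ⊆ G) {C T : VClause}
    (hC : C ∈ REF F s) (h1 : C ⊆ T) (h2 : ∀ l ∈ C, nLit (.P (RefVar.idx l.1)) ∈ T)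
    (hT : Clause.Nontaut T) : Dv G 1 T :=
  Dv.ax hT ⟨relCl C, hG (relCl_mem_RREF hC), relCl_subset h1 h2⟩

section REFmem
variable {F : CNFFam} {s : ℕ}

theorem memREF_A1 {u : ℕ} (hu : u ∈ Finset.Icc 1 s) :
    ((Finset.range (F.n + 1)).image (fun i => pLit (.V u i))) ∈ REF F s := by
  have : _ ∈ Ref.A1 F (Finset.Icc 1 s) := ⟨u, hu, rfl⟩
  simp only [REF, REFA, Set.mem_union]; tauto

theorem memREF_A2 {u : ℕ} (hu : u ∈ Finset.Icc 1 s) :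
    ((Finset.range (F.m + 1)).image (fun j => pLit (.I u j))) ∈ REF F s := by
  have : _ ∈ Ref.A2 F (Finset.Icc 1 s) := ⟨u, hu, rfl⟩
  simp only [REF, REFA, Set.mem_union]; tauto

theorem memREF_A3 {u : ℕ} (hu : u ∈ Finset.Icc 1 s) :
    ((insert 0 (Finset.Icc 1 s)).image (fun v => pLit (.L u v))) ∈ REF F s := by
  have : _ ∈ Ref.A3 (Finset.Icc 1 s) := ⟨u, hu, rfl⟩
  simp only [REF, REFA, Set.mem_union]; tauto

theorem memREF_A4 {u : ℕ} (hu : u ∈ Finset.Icc 1 s) :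
    ((insert 0 (Finset.Icc 1 s)).image (fun v => pLit (.R u v))) ∈ REF F s := by
  have : _ ∈ Ref.A4 (Finset.Icc 1 s) := ⟨u, hu, rfl⟩
  simp only [REF, REFA, Set.mem_union]; tauto

theorem memREF_A9 {u : ℕ} (hu : u ∈ Finset.Icc 1 s) :
    ({nLit (.I u 0), nLit (.V u 0)} : VClause) ∈ REF F s := by
  have : _ ∈ Ref.A9 (Finset.Icc 1 s) := ⟨u, hu, rfl⟩
  simp only [REF, REFA, Set.mem_union]; tauto

theorem memREF_A11 {u : ℕ} (hu : u ∈ Finset.Icc 1 s) :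
    ({nLit (.I u 0), nLit (.L u 0)} : VClause) ∈ REF F s := by
  have : _ ∈ Ref.A11 (Finset.Icc 1 s) := ⟨u, hu, rfl⟩
  simp only [REF, REFA, Set.mem_union]; tauto

theorem memREF_A12 {u : ℕ} (hu : u ∈ Finset.Icc 1 s) :
    ({nLit (.I u 0), nLit (.R u 0)} : VClause) ∈ REF F s := by
  have : _ ∈ Ref.A12 (Finset.Icc 1 s) := ⟨u, hu, rfl⟩
  simp only [REF, REFA, Set.mem_union]; tauto

theorem memREF_A13 {u v : ℕ} (hu : u ∈ Finset.Icc 1 s) (hv : v ∈ Finset.Icc 1 s) (huv : u ≤ v) :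
    ({nLit (.L u v)} : VClause) ∈ REF F s := by
  have : _ ∈ Ref.A13 (Finset.Icc 1 s) := ⟨u, hu, v, hv, huv, rfl⟩
  simp only [REF, REFA, Set.mem_union]; tauto

theorem memREF_A14 {u v : ℕ} (hu : u ∈ Finset.Icc 1 s) (hv : v ∈ Finset.Icc 1 s) (huv : u ≤ v) :
    ({nLit (.R u v)} : VClause) ∈ REF F s := by
  have : _ ∈ Ref.A14 (Finset.Icc 1 s) := ⟨u, hu, v, hv, huv, rfl⟩
  simp only [REF, REFA, Set.mem_union]; tauto

theorem memREF_A15 {u v i : ℕ} (hu : u ∈ Finset.Icc 1 s) (hv : v ∈ Finset.Icc 1 s)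
    (hi : i ∈ Finset.Icc 1 F.n) :
    ({nLit (.L u v), nLit (.V u i), pLit (.D v i false)} : VClause) ∈ REF F s := by
  have : _ ∈ Ref.A15 F (Finset.Icc 1 s) := ⟨u, hu, v, hv, i, hi, rfl⟩
  simp only [REF, REFA, Set.mem_union]; tauto

theorem memREF_A16 {u v i : ℕ} (hu : u ∈ Finset.Icc 1 s) (hv : v ∈ Finset.Icc 1 s)
    (hi : i ∈ Finset.Icc 1 F.n) :
    ({nLit (.R u v), nLit (.V u i), pLit (.D v i true)} : VClause) ∈ REF F s := by
  have : _ ∈ Ref.A16 F (Finset.Icc 1 s) := ⟨u, hu, v, hv, i, hi, rfl⟩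
  simp only [REF, REFA, Set.mem_union]; tauto

theorem memREF_A17 {u v i i' : ℕ} {b : Bool} (hu : u ∈ Finset.Icc 1 s)
    (hv : v ∈ Finset.Icc 1 s) (hi : i ∈ Finset.Icc 1 F.n) (hi' : i' ∈ Finset.Icc 1 F.n)
    (hne : i' ≠ i) :
    ({nLit (.L u v), nLit (.V u i), nLit (.D v i' b), pLit (.D u i' b)} : VClause) ∈ REF F s := by
  have : _ ∈ Ref.A17 F (Finset.Icc 1 s) := ⟨u, hu, v, hv, i, hi, i', hi', b, hne, rfl⟩
  simp only [REF, REFA, Set.mem_union]; tauto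

theorem memREF_A18 {u v i i' : ℕ} {b : Bool} (hu : u ∈ Finset.Icc 1 s)
    (hv : v ∈ Finset.Icc 1 s) (hi : i ∈ Finset.Icc 1 F.n) (hi' : i' ∈ Finset.Icc 1 F.n)
    (hne : i' ≠ i) :
    ({nLit (.R u v), nLit (.V u i), nLit (.D v i' b), pLit (.D u i' b)} : VClause) ∈ REF F s := by
  have : _ ∈ Ref.A18 F (Finset.Icc 1 s) := ⟨u, hu, v, hv, i, hi, i', hi', b, hne, rfl⟩
  simp only [REF, REFA, Set.mem_union]; tauto

theorem memREF_A19 {u j i : ℕ} {b : Bool} (hu : u ∈ Finset.Icc 1 s)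
    (hj : j ∈ Finset.Icc 1 F.m) (hib : (i, b) ∈ F.Cl j) :
    ({nLit (.I u j), pLit (.D u i b)} : VClause) ∈ REF F s := by
  have : _ ∈ Ref.A19 F (Finset.Icc 1 s) := ⟨u, hu, j, hj, i, b, hib, rfl⟩
  simp only [REF, REFA, Set.mem_union]; tauto

theorem memREF_A20 {u i : ℕ} (hu : u ∈ Finset.Icc 1 s) (hi : i ∈ Finset.Icc 1 F.n) :
    ({nLit (.D u i false), nLit (.D u i true)} : VClause) ∈ REF F s := by
  have : _ ∈ Ref.A20 F (Finset.Icc 1 s) := ⟨u, hu, i, hi, rfl⟩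
  simp only [REF, REFA, Set.mem_union]; tauto

theorem memREF_A21 {i : ℕ} {b : Bool} (hi : i ∈ Finset.Icc 1 F.n) :
    ({nLit (.D s i b)} : VClause) ∈ REF F s := by
  have : _ ∈ Ref.A21 F s := ⟨i, hi, b, rfl⟩
  simp only [REF, REFA, Set.mem_union]; tauto

end REFmem
/-- A clause is nontautological if some sign function describes all its literals. -/
theorem nontaut_sign (f : RefVar → Bool) {C : VClause} (h : ∀ l ∈ C, l.2 = f l.1) :
    Clause.Nontaut C := by
  intro x hx
  have h1 := h _ hx.1
  have h2 := h _ hx.2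
  simp only at h1 h2
  rw [← h1] at h2
  exact Bool.noConfusion h2

def Body (a : ℕ → Bool) (n u : ℕ) : VClause :=
  (Finset.Icc 1 n).image (fun i => pLit (.D u i (a i)))

def Ecl (a : ℕ → Bool) (n u : ℕ) : VClause := insert (nLit (.P u)) (Body a n u)

theorem Body_lits {a : ℕ → Bool} {n u : ℕ} {l : RefVar × Bool} (hl : l ∈ Body a n u) :
    ∃ i, 1 ≤ i ∧ i ≤ n ∧ l = (RefVar.D u i (a i), true) := by
  obtain ⟨i, hi, rfl⟩ := Finset.mem_image.1 hl
  exact ⟨i, (Finset.mem_Icc.1 hi).1, (Finset.mem_Icc.1 hi).2, rfl⟩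

theorem Body_mem {a : ℕ → Bool} {n u i : ℕ} (h1 : 1 ≤ i) (h2 : i ≤ n) :
    (RefVar.D u i (a i), true) ∈ Body a n u :=
  Finset.mem_image_of_mem _ (Finset.mem_Icc.2 ⟨h1, h2⟩)

def SLv (lr : Bool) (u v : ℕ) : RefVar := if lr then .L u v else .R u v

theorem SLv_idx (lr : Bool) (u v : ℕ) : (SLv lr u v).idx = u := by
  cases lr <;> rfl

theorem SLv_ne_D (lr : Bool) (u v w i : ℕ) (b : Bool) : SLv lr u v ≠ .D w i b := by
  cases lr <;> simp [SLv]

section AxFacade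
variable {F : CNFFam} {s : ℕ}

theorem memREF_A34 {u : ℕ} (lr : Bool) (hu : u ∈ Finset.Icc 1 s) :
    ((insert 0 (Finset.Icc 1 s)).image (fun v => pLit (SLv lr u v))) ∈ REF F s := by
  cases lr
  · exact memREF_A4 hu
  · exact memREF_A3 hu

theorem memREF_A1112 {u : ℕ} (lr : Bool) (hu : u ∈ Finset.Icc 1 s) :
    ({nLit (.I u 0), nLit (SLv lr u 0)} : VClause) ∈ REF F s := by
  cases lr
  · exact memREF_A12 hu
  · exact memREF_A11 hu

theorem memREF_A1314 {u v : ℕ} (lr : Bool) (hu : u ∈ Finset.Icc 1 s)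
    (hv : v ∈ Finset.Icc 1 s) (huv : u ≤ v) :
    ({nLit (SLv lr u v)} : VClause) ∈ REF F s := by
  cases lr
  · exact memREF_A14 hu hv huv
  · exact memREF_A13 hu hv huv

theorem memREF_A1516 {u v i : ℕ} (lr : Bool) (hu : u ∈ Finset.Icc 1 s)
    (hv : v ∈ Finset.Icc 1 s) (hi : i ∈ Finset.Icc 1 F.n) :
    ({nLit (SLv lr u v), nLit (.V u i), pLit (.D v i (!lr))} : VClause) ∈ REF F s := by
  cases lr
  · exact memREF_A16 hu hv hi
  · exact memREF_A15 hu hv hi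

theorem memREF_A1718 {u v i i' : ℕ} {b : Bool} (lr : Bool) (hu : u ∈ Finset.Icc 1 s)
    (hv : v ∈ Finset.Icc 1 s) (hi : i ∈ Finset.Icc 1 F.n) (hi' : i' ∈ Finset.Icc 1 F.n)
    (hne : i' ≠ i) :
    ({nLit (SLv lr u v), nLit (.V u i), nLit (.D v i' b), pLit (.D u i' b)} : VClause)
      ∈ REF F s := by
  cases lr
  · exact memREF_A18 hu hv hi hi' hne
  · exact memREF_A17 hu hv hi hi' hne

theorem memRREF_A2223 {u v : ℕ} (lr : Bool) (hu : u ∈ Finset.Icc 1 s)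
    (hv : v ∈ Finset.Icc 1 s) :
    ({nLit (.P u), nLit (SLv lr u v), pLit (.P v)} : VClause) ∈ RREF F s := by
  cases lr
  · exact A23_mem_RREF hu hv
  · exact A22_mem_RREF hu hv

end AxFacade

section DvAx
variable {F : CNFFam} {s : ℕ} {G : Set VClause} (hG : RREF F s ⊆ G)
include hG

/-- cleaned A22/A23: `¬P[u] ∨ ¬S[u,v] ∨ P[v]`. -/
theorem dv_t1 {u v : ℕ} (lr : Bool) (hu : u ∈ Finset.Icc 1 s) (hv : v ∈ Finset.Icc 1 s)
    (hne : u ≠ v) :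
    Dv G 1 ({nLit (.P u), nLit (SLv lr u v), pLit (.P v)} : VClause) := by
  refine Dv.ax ?_ ⟨_, hG (memRREF_A2223 lr hu hv), subset_rfl⟩
  intro x hx
  obtain ⟨h1, h0⟩ := hx
  cases lr <;> simp [pLit, nLit, SLv] at h1 h0 <;> simp_all

/-- cleaned A13/A14 + A22/A23: `¬P[u] ∨ ¬S[u,v]` for `u ≤ v`. -/
theorem dv_SL13 {u v : ℕ} (lr : Bool) (hu : u ∈ Finset.Icc 1 s) (hv : v ∈ Finset.Icc 1 s)
    (huv : u ≤ v) :
    Dv G 3 ({nLit (.P u), nLit (SLv lr u v)} : VClause) := by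
  have hnt : Clause.Nontaut ({nLit (.P u), nLit (SLv lr u v)} : VClause) := by
    apply nontaut_sign (fun _ => false)
    intro l hl
    rcases Finset.mem_insert.1 hl with rfl | hl
    · rfl
    · rw [Finset.mem_singleton.1 hl]; rfl
  rcases eq_or_lt_of_le huv with rfl | hlt
  · refine (Dv.ax hnt ⟨relCl {nLit (SLv lr u u)}, hG (relCl_mem_RREF (memREF_A1314 lr hu hu le_rfl)), ?_⟩).monoK (by omega)
    apply relCl_subset
    · intro l hl
      rw [Finset.mem_singleton.1 hl]
      simp
    · intro l hl
      rw [Finset.mem_singleton.1 hl]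
      simp [nLit, SLv_idx]
  · have hA13 : Dv G 1 ({nLit (.P u), nLit (.P v), nLit (SLv lr u v)} : VClause) := by
      refine dv_relax hG (memREF_A1314 lr hu hv huv) ?_ ?_ ?_
      · intro l hl; rw [Finset.mem_singleton.1 hl]; simp
      · intro l hl; rw [Finset.mem_singleton.1 hl]; simp [nLit, SLv_idx]
      · apply nontaut_sign (fun _ => false)
        intro l hl
        rcases Finset.mem_insert.1 hl with rfl | hl
        · rfl
        rcases Finset.mem_insert.1 hl with rfl | hl
        · rfl
        · rw [Finset.mem_singleton.1 hl]; rfl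
    have hA22 : Dv G 1 ({nLit (.P u), nLit (SLv lr u v), pLit (.P v)} : VClause) :=
      dv_t1 hG lr hu hv (by omega)
    refine (Dv.res (x := RefVar.P v) (b := true) hA22 hA13 ?_ ?_ ?_ ?_ hnt).monoK (by omega)
    · simp [pLit]
    · simp [nLit]
    · intro l hl
      simp only [Finset.mem_insert, Finset.mem_singleton] at hl
      rcases hl with rfl | rfl | rfl <;> simp [pLit, nLit]
    · intro l hl
      simp only [Finset.mem_insert, Finset.mem_singleton] at hl
      rcases hl with rfl | rfl | rfl <;> simp [pLit, nLit]
end DvAx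
section DvAx2
variable {F : CNFFam} {s : ℕ} {G : Set VClause} (hG : RREF F s ⊆ G)
include hG

/-- cleaned A17/A18: `¬P[u] ∨ ¬S[u,v] ∨ ¬V[u,i] ∨ ¬D[v,i',b] ∨ D[u,i',b]`. -/
theorem dv_A1718 {u v i i' : ℕ} {b : Bool} (lr : Bool) (hu : u ∈ Finset.Icc 1 s)
    (hv : v ∈ Finset.Icc 1 s) (hvu : v < u) (hi : i ∈ Finset.Icc 1 F.n)
    (hi' : i' ∈ Finset.Icc 1 F.n) (hne : i' ≠ i) :
    Dv G 3 ({nLit (.P u), nLit (SLv lr u v), nLit (.V u i), nLit (.D v i' b),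
      pLit (.D u i' b)} : VClause) := by
  have hntT : Clause.Nontaut ({nLit (.P u), nLit (.P v), nLit (SLv lr u v), nLit (.V u i),
      nLit (.D v i' b), pLit (.D u i' b)} : VClause) := by
    intro x hx
    obtain ⟨h1, h0⟩ := hx
    cases lr <;> simp [pLit, nLit, SLv] at h1 h0 <;> subst h1 <;> simp at h0 <;> omega
  have hT : Dv G 1 ({nLit (.P u), nLit (.P v), nLit (SLv lr u v), nLit (.V u i),
      nLit (.D v i' b), pLit (.D u i' b)} : VClause) := by
    refine dv_relax hG (memREF_A1718 (b := b) lr hu hv hi hi' hne) ?_ ?_ hntT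
    · intro l hl
      simp only [Finset.mem_insert, Finset.mem_singleton] at hl
      rcases hl with rfl | rfl | rfl | rfl <;> simp
    · intro l hl
      simp only [Finset.mem_insert, Finset.mem_singleton] at hl
      rcases hl with rfl | rfl | rfl | rfl <;> cases lr <;> simp [SLv, pLit, nLit, RefVar.idx]
  have ht1 : Dv G 1 ({nLit (.P u), nLit (SLv lr u v), pLit (.P v)} : VClause) :=
    dv_t1 hG lr hu hv (by omega)
  have hnt : Clause.Nontaut ({nLit (.P u), nLit (SLv lr u v), nLit (.V u i), nLit (.D v i' b),
      pLit (.D u i' b)} : VClause) := by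
    intro x hx
    obtain ⟨h1, h0⟩ := hx
    cases lr <;> simp [pLit, nLit, SLv] at h1 h0 <;> subst h1 <;> simp at h0 <;> omega
  refine (Dv.res (x := RefVar.P v) (b := true) ht1 hT ?_ ?_ ?_ ?_ hnt).monoK (by omega)
  · simp [pLit]
  · simp [nLit]
  · intro l hl
    simp only [Finset.mem_insert, Finset.mem_singleton] at hl
    rcases hl with rfl | rfl | rfl <;> simp [pLit, nLit]
  · intro l hl
    simp only [Finset.mem_insert, Finset.mem_singleton] at hl
    rcases hl with rfl | rfl | rfl | rfl | rfl | rfl <;> simp [pLit, nLit]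

/-- the clause `W`: `¬P[u] ∨ ¬S[u,v] ∨ ¬V[u,i] ∨ ¬D[v,i,lr]` (from A15/A16, A20, A22/A23). -/
theorem dv_W {u v i : ℕ} (lr : Bool) (hu : u ∈ Finset.Icc 1 s) (hv : v ∈ Finset.Icc 1 s)
    (hvu : v < u) (hi : i ∈ Finset.Icc 1 F.n) :
    Dv G 7 ({nLit (.P u), nLit (SLv lr u v), nLit (.V u i), nLit (.D v i lr)} : VClause) := by
  have ht1 : Dv G 1 ({nLit (.P u), nLit (SLv lr u v), pLit (.P v)} : VClause) :=
    dv_t1 hG lr hu hv (by omega)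
  -- cleaned A15/A16
  have h1516 : Dv G 3 ({nLit (.P u), nLit (SLv lr u v), nLit (.V u i),
      pLit (.D v i (!lr))} : VClause) := by
    have hntT : Clause.Nontaut ({nLit (.P u), nLit (.P v), nLit (SLv lr u v), nLit (.V u i),
        pLit (.D v i (!lr))} : VClause) := by
      intro x hx
      obtain ⟨h1, h0⟩ := hx
      cases lr <;> simp [pLit, nLit, SLv] at h1 h0 <;> subst h1 <;> simp at h0
    have hT : Dv G 1 ({nLit (.P u), nLit (.P v), nLit (SLv lr u v), nLit (.V u i),
        pLit (.D v i (!lr))} : VClause) := by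
      refine dv_relax hG (memREF_A1516 lr hu hv hi) ?_ ?_ hntT
      · intro l hl
        simp only [Finset.mem_insert, Finset.mem_singleton] at hl
        rcases hl with rfl | rfl | rfl <;> simp
      · intro l hl
        simp only [Finset.mem_insert, Finset.mem_singleton] at hl
        rcases hl with rfl | rfl | rfl <;> cases lr <;> simp [SLv, pLit, nLit, RefVar.idx]
    have hnt : Clause.Nontaut ({nLit (.P u), nLit (SLv lr u v), nLit (.V u i),
        pLit (.D v i (!lr))} : VClause) := by
      intro x hx
      obtain ⟨h1, h0⟩ := hx
      cases lr <;> simp [pLit, nLit, SLv] at h1 h0 <;> subst h1 <;> simp at h0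
    refine (Dv.res (x := RefVar.P v) (b := true) ht1 hT ?_ ?_ ?_ ?_ hnt).monoK (by omega)
    · simp [pLit]
    · simp [nLit]
    · intro l hl
      simp only [Finset.mem_insert, Finset.mem_singleton] at hl
      rcases hl with rfl | rfl | rfl <;> simp [pLit, nLit]
    · intro l hl
      simp only [Finset.mem_insert, Finset.mem_singleton] at hl
      rcases hl with rfl | rfl | rfl | rfl | rfl <;> simp [pLit, nLit]
  -- cleaned A20 (at index v)
  have h20 : Dv G 3 ({nLit (.P u), nLit (SLv lr u v), nLit (.D v i false),
      nLit (.D v i true)} : VClause) := by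
    have hntT : Clause.Nontaut ({nLit (.P v), nLit (.D v i false), nLit (.D v i true)} :
        VClause) := by
      apply nontaut_sign (fun _ => false)
      intro l hl
      simp only [Finset.mem_insert, Finset.mem_singleton] at hl
      rcases hl with rfl | rfl | rfl <;> rfl
    have hT : Dv G 1 ({nLit (.P v), nLit (.D v i false), nLit (.D v i true)} : VClause) := by
      refine dv_relax hG (memREF_A20 hv hi) ?_ ?_ hntT
      · intro l hl
        simp only [Finset.mem_insert, Finset.mem_singleton] at hl
        rcases hl with rfl | rfl <;> simp
      · intro l hl
        simp only [Finset.mem_insert, Finset.mem_singleton] at hl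
        rcases hl with rfl | rfl <;> simp [nLit, RefVar.idx]
    have hnt : Clause.Nontaut ({nLit (.P u), nLit (SLv lr u v), nLit (.D v i false),
        nLit (.D v i true)} : VClause) := by
      apply nontaut_sign (fun _ => false)
      intro l hl
      simp only [Finset.mem_insert, Finset.mem_singleton] at hl
      rcases hl with rfl | rfl | rfl | rfl <;> rfl
    refine (Dv.res (x := RefVar.P v) (b := true) ht1 hT ?_ ?_ ?_ ?_ hnt).monoK (by omega)
    · simp [pLit]
    · simp [nLit]
    · intro l hl
      simp only [Finset.mem_insert, Finset.mem_singleton] at hl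
      rcases hl with rfl | rfl | rfl <;> simp [pLit, nLit]
    · intro l hl
      simp only [Finset.mem_insert, Finset.mem_singleton] at hl
      rcases hl with rfl | rfl | rfl <;> simp [pLit, nLit]
  -- resolve on D[v,i,!lr]
  have hnt : Clause.Nontaut ({nLit (.P u), nLit (SLv lr u v), nLit (.V u i),
      nLit (.D v i lr)} : VClause) := by
    apply nontaut_sign (fun _ => false)
    intro l hl
    simp only [Finset.mem_insert, Finset.mem_singleton] at hl
    rcases hl with rfl | rfl | rfl | rfl <;> rfl
  refine (Dv.res (x := RefVar.D v i (!lr)) (b := true) h1516 h20 ?_ ?_ ?_ ?_ hnt).monoK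
    (by omega)
  · simp [pLit]
  · cases lr <;> simp [nLit]
  · intro l hl
    simp only [Finset.mem_insert, Finset.mem_singleton] at hl
    rcases hl with rfl | rfl | rfl | rfl <;> simp [pLit, nLit]
  · intro l hl
    simp only [Finset.mem_insert, Finset.mem_singleton] at hl
    rcases hl with rfl | rfl | rfl | rfl <;> cases lr <;> simp [pLit, nLit]

end DvAx2
section DvQ
variable {F : CNFFam} {s : ℕ} {G : Set VClause} (hG : RREF F s ⊆ G)
include hG

theorem dv_Q {u v i : ℕ} (a : ℕ → Bool) (hu : u ∈ Finset.Icc 1 s) (hv : v ∈ Finset.Icc 1 s)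
    (hvu : v < u) (hi : i ∈ Finset.Icc 1 F.n) (hE : Dv G 1 (Ecl a F.n v)) :
    Dv G (8 * F.n + 3) (insert (nLit (.P u)) (insert (nLit (.I u 0)) (insert (nLit (.V u i))
      (insert (nLit (SLv (a i) u v)) (Body a F.n u))))) := by
  set lr := a i with hlr
  set Qv : VClause := insert (nLit (.P u)) (insert (nLit (.I u 0)) (insert (nLit (.V u i))
      (insert (nLit (SLv lr u v)) (Body a F.n u)))) with hQv
  set T : ℕ → VClause := fun j =>
    Qv ∪ (Finset.Icc 1 j).image (fun i' => pLit (.D v i' (a i'))) with hT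
  have memQv : ∀ l ∈ Qv, l = nLit (.P u) ∨ l = nLit (.I u 0) ∨ l = nLit (.V u i) ∨
      l = nLit (SLv lr u v) ∨ l ∈ Body a F.n u := by
    intro l hl
    simp only [hQv, Finset.mem_insert] at hl
    tauto
  have hntT : ∀ j, Clause.Nontaut (T j) := by
    intro j
    apply nontaut_sign (fun y => match y with | .D _ _ _ => true | _ => false)
    intro l hl
    rcases Finset.mem_union.1 hl with hl | hl
    · rcases memQv l hl with rfl | rfl | rfl | rfl | hl
      · rfl
      · rfl
      · rfl
      · cases lr <;> rfl
      · obtain ⟨i', _, _, rfl⟩ := Body_lits hl; rfl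
    · obtain ⟨i', _, rfl⟩ := Finset.mem_image.1 hl; rfl
  have ht1 : Dv G 1 ({nLit (.P u), nLit (SLv lr u v), pLit (.P v)} : VClause) :=
    dv_t1 hG lr hu hv (by omega)
  have h0 : Dv G 3 (T F.n) := by
    refine (Dv.res (x := RefVar.P v) (b := true) ht1 hE ?_ ?_ ?_ ?_ (hntT F.n)).monoK
      (by omega)
    · simp [pLit]
    · simp [Ecl, nLit]
    · intro l hl
      simp only [Finset.mem_insert, Finset.mem_singleton] at hl
      rcases hl with rfl | rfl | rfl
      · exact Finset.mem_insert_of_mem (Finset.mem_union_left _ (by simp [hQv]))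
      · exact Finset.mem_insert_of_mem (Finset.mem_union_left _ (by simp [hQv]))
      · exact Finset.mem_insert_self _ _
    · intro l hl
      rcases Finset.mem_insert.1 hl with rfl | hl
      · exact Finset.mem_insert_self _ _
      · obtain ⟨i', h1, h2, rfl⟩ := Body_lits hl
        exact Finset.mem_insert_of_mem (Finset.mem_union_right _
          (Finset.mem_image_of_mem _ (Finset.mem_Icc.2 ⟨h1, h2⟩)))
  have key := Dv.chain (F := G) (c := 7) (B := 3) (N := F.n) (T := T)
    (x := fun j => RefVar.D v j (a j)) h0 (fun j _ => hntT j) ?_ ?_ ?_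
  · have hT0 : T 0 = Qv := by
      simp [hT, Finset.Icc_eq_empty (by omega : ¬ (1:ℕ) ≤ 0)]
    rw [hT0] at key
    exact key.monoK (by omega)
  · -- hQ
    intro j hj1 hjn
    rcases eq_or_ne j i with rfl | hne
    · refine ⟨_, dv_W hG lr hu hv hvu hi, ?_, ?_⟩
      · rw [hlr]; simp [nLit]
      · intro l hl
        simp only [Finset.mem_insert, Finset.mem_singleton] at hl
        rcases hl with rfl | rfl | rfl | rfl
        · exact Finset.mem_insert_of_mem (Finset.mem_union_left _ (by simp [hQv]))
        · exact Finset.mem_insert_of_mem (Finset.mem_union_left _ (by simp [hQv]))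
        · exact Finset.mem_insert_of_mem (Finset.mem_union_left _ (by simp [hQv]))
        · rw [hlr]; exact Finset.mem_insert_self _ _
    · refine ⟨_, (dv_A1718 (b := a j) hG lr hu hv hvu hi
        (Finset.mem_Icc.2 ⟨hj1, hjn⟩) hne).monoK (by omega), ?_, ?_⟩
      · simp [nLit]
      · intro l hl
        simp only [Finset.mem_insert, Finset.mem_singleton] at hl
        rcases hl with rfl | rfl | rfl | rfl | rfl
        · exact Finset.mem_insert_of_mem (Finset.mem_union_left _ (by simp [hQv]))
        · exact Finset.mem_insert_of_mem (Finset.mem_union_left _ (by simp [hQv]))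
        · exact Finset.mem_insert_of_mem (Finset.mem_union_left _ (by simp [hQv]))
        · exact Finset.mem_insert_self _ _
        · exact Finset.mem_insert_of_mem (Finset.mem_union_left _ (by
            simp only [hQv]
            exact Finset.mem_insert_of_mem (Finset.mem_insert_of_mem
              (Finset.mem_insert_of_mem (Finset.mem_insert_of_mem (Body_mem hj1 hjn))))))
  · -- hm
    intro j hj1 hjn
    exact Finset.mem_union_right _ (Finset.mem_image_of_mem _ (Finset.mem_Icc.2 ⟨hj1, le_rfl⟩))
  · -- hs
    intro j hj1 hjn
    intro l hl
    rcases Finset.mem_union.1 hl with hl | hl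
    · exact Finset.mem_insert_of_mem (Finset.mem_union_left _ hl)
    · obtain ⟨i', hi', rfl⟩ := Finset.mem_image.1 hl
      rw [Finset.mem_Icc] at hi'
      rcases eq_or_ne i' j with rfl | hne
      · exact Finset.mem_insert_self _ _
      · exact Finset.mem_insert_of_mem (Finset.mem_union_right _
          (Finset.mem_image_of_mem _ (Finset.mem_Icc.2 ⟨hi'.1, by omega⟩)))

end DvQ
section DvN
variable {F : CNFFam} {s : ℕ} {G : Set VClause} (hG : RREF F s ⊆ G)
include hG

theorem dv_N {u i : ℕ} (a : ℕ → Bool) (hu : u ∈ Finset.Icc 1 s) (hi : i ∈ Finset.Icc 1 F.n)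
    (hE : ∀ v, 1 ≤ v → v < u → Dv G 1 (Ecl a F.n v)) :
    Dv G (s * (8 * F.n + 4) + 3) (insert (nLit (.P u)) (insert (nLit (.I u 0))
      (insert (nLit (.V u i)) (Body a F.n u)))) := by
  set lr := a i with hlr
  set Ncl : VClause := insert (nLit (.P u)) (insert (nLit (.I u 0))
      (insert (nLit (.V u i)) (Body a F.n u))) with hNcl
  set T : ℕ → VClause := fun w =>
    Ncl ∪ (Finset.range (w + 1)).image (fun v => pLit (SLv lr u v)) with hT
  have memNcl : ∀ l ∈ Ncl, l = nLit (.P u) ∨ l = nLit (.I u 0) ∨ l = nLit (.V u i) ∨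
      l ∈ Body a F.n u := by
    intro l hl
    simp only [hNcl, Finset.mem_insert] at hl
    tauto
  have hntT : ∀ w, Clause.Nontaut (T w) := by
    intro w
    apply nontaut_sign (fun y => match y with
      | .P _ => false | .I _ _ => false | .V _ _ => false | _ => true)
    intro l hl
    rcases Finset.mem_union.1 hl with hl | hl
    · rcases memNcl l hl with rfl | rfl | rfl | hl
      · rfl
      · rfl
      · rfl
      · obtain ⟨i', _, _, rfl⟩ := Body_lits hl; rfl
    · obtain ⟨w', _, rfl⟩ := Finset.mem_image.1 hl; cases lr <;> rfl
  have h0 : Dv G 1 (T s) := by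
    refine dv_relax hG (memREF_A34 lr hu) ?_ ?_ (hntT s)
    · intro l hl
      obtain ⟨w, hw, rfl⟩ := Finset.mem_image.1 hl
      refine Finset.mem_union_right _ (Finset.mem_image_of_mem _ ?_)
      simp only [Finset.mem_insert, Finset.mem_Icc] at hw
      simp only [Finset.mem_range]
      omega
    · intro l hl
      obtain ⟨w, hw, rfl⟩ := Finset.mem_image.1 hl
      rw [show ((pLit (SLv lr u w)).1.idx) = u by simp [pLit, SLv_idx]]
      exact Finset.mem_union_left _ (by simp [hNcl])
  have key := Dv.chain (F := G) (c := 8 * F.n + 3) (B := 1) (N := s) (T := T)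
    (x := fun v => SLv lr u v) h0 (fun w _ => hntT w) ?_ ?_ ?_
  · -- T 0 = Ncl ∪ {pLit (SLv lr u 0)}; resolve with A11/A12
    have hA1112 : Dv G 1 ({nLit (.P u), nLit (.I u 0), nLit (SLv lr u 0)} : VClause) := by
      refine dv_relax hG (memREF_A1112 lr hu) ?_ ?_ ?_
      · intro l hl
        simp only [Finset.mem_insert, Finset.mem_singleton] at hl
        rcases hl with rfl | rfl <;> simp
      · intro l hl
        simp only [Finset.mem_insert, Finset.mem_singleton] at hl
        rcases hl with rfl | rfl
        · simp [nLit, RefVar.idx]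
        · rw [show ((nLit (SLv lr u 0)).1.idx) = u by simp [nLit, SLv_idx]]; simp
      · apply nontaut_sign (fun _ => false)
        intro l hl
        simp only [Finset.mem_insert, Finset.mem_singleton] at hl
        rcases hl with rfl | rfl | rfl
        · rfl
        · rfl
        · rfl
    have hntN : Clause.Nontaut Ncl := by
      apply nontaut_sign (fun y => match y with
        | .P _ => false | .I _ _ => false | .V _ _ => false | _ => true)
      intro l hl
      rcases memNcl l hl with rfl | rfl | rfl | hl
      · rfl
      · rfl
      · rfl
      · obtain ⟨i', _, _, rfl⟩ := Body_lits hl; rfl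
    refine (Dv.res (x := SLv lr u 0) (b := true) key hA1112 ?_ ?_ ?_ ?_ hntN).monoK (by ring_nf; omega)
    · exact Finset.mem_union_right _ (Finset.mem_image_of_mem _ (by simp))
    · simp [nLit]
    · intro l hl
      rcases Finset.mem_union.1 hl with hl | hl
      · exact Finset.mem_insert_of_mem hl
      · obtain ⟨w, hw, rfl⟩ := Finset.mem_image.1 hl
        simp only [Finset.mem_range] at hw
        rw [show w = 0 by omega]
        exact Finset.mem_insert_self _ _
    · intro l hl
      simp only [Finset.mem_insert, Finset.mem_singleton] at hl
      rcases hl with rfl | rfl | rfl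
      · exact Finset.mem_insert_of_mem (by simp [hNcl])
      · exact Finset.mem_insert_of_mem (by simp [hNcl])
      · exact Finset.mem_insert_self _ _
  · -- hQ
    intro v hv1 hvs
    rcases lt_or_ge v u with hvu | huv
    · refine ⟨_, dv_Q hG a hu (Finset.mem_Icc.2 ⟨hv1, hvs⟩) hvu hi
        (hE v hv1 hvu), ?_, ?_⟩
      · rw [← hlr]; simp [nLit]
      · intro l hl
        simp only [Finset.mem_insert] at hl
        rcases hl with rfl | rfl | rfl | rfl | hl
        · exact Finset.mem_insert_of_mem (Finset.mem_union_left _ (by simp [hNcl]))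
        · exact Finset.mem_insert_of_mem (Finset.mem_union_left _ (by simp [hNcl]))
        · exact Finset.mem_insert_of_mem (Finset.mem_union_left _ (by simp [hNcl]))
        · rw [← hlr]; exact Finset.mem_insert_self _ _
        · refine Finset.mem_insert_of_mem (Finset.mem_union_left _ ?_)
          simp only [hNcl]
          exact Finset.mem_insert_of_mem (Finset.mem_insert_of_mem
            (Finset.mem_insert_of_mem hl))
    · refine ⟨_, (dv_SL13 hG lr hu (Finset.mem_Icc.2 ⟨hv1, hvs⟩) huv).monoK (by omega),
        ?_, ?_⟩
      · simp [nLit]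
      · intro l hl
        simp only [Finset.mem_insert, Finset.mem_singleton] at hl
        rcases hl with rfl | rfl
        · exact Finset.mem_insert_of_mem (Finset.mem_union_left _ (by simp [hNcl]))
        · exact Finset.mem_insert_self _ _
  · -- hm
    intro v hv1 hvs
    exact Finset.mem_union_right _ (Finset.mem_image_of_mem _ (by simp))
  · -- hs
    intro v hv1 hvs l hl
    rcases Finset.mem_union.1 hl with hl | hl
    · exact Finset.mem_insert_of_mem (Finset.mem_union_left _ hl)
    · obtain ⟨w, hw, rfl⟩ := Finset.mem_image.1 hl
      simp only [Finset.mem_range] at hw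
      rcases eq_or_ne w v with rfl | hne
      · exact Finset.mem_insert_self _ _
      · exact Finset.mem_insert_of_mem (Finset.mem_union_right _
          (Finset.mem_image_of_mem _ (by simp only [Finset.mem_range]; omega)))

end DvN
section DvE
variable {F : CNFFam} {s : ℕ} {G : Set VClause} (hG : RREF F s ⊆ G)
include hG

omit hG in
theorem Ecl_nontaut (a : ℕ → Bool) (n u : ℕ) : Clause.Nontaut (Ecl a n u) := by
  apply nontaut_sign (fun y => match y with | .D _ _ _ => true | _ => false)
  intro l hl
  rcases Finset.mem_insert.1 hl with rfl | hl
  · rfl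
  · obtain ⟨i', _, _, rfl⟩ := Body_lits hl; rfl

theorem dv_E {u : ℕ} (a : ℕ → Bool) (hWF : F.WF)
    (hsat : ∀ j ∈ Finset.Icc 1 F.m, ∃ l ∈ F.Cl j, a l.1 = l.2)
    (hu : u ∈ Finset.Icc 1 s)
    (hE : ∀ v, 1 ≤ v → v < u → Dv G 1 (Ecl a F.n v)) :
    Dv G (F.n * (s * (8 * F.n + 4) + 4) + 2 * F.m + 6) (Ecl a F.n u) := by
  -- K chain: eliminate I[u,j] for j = m .. 1
  set TK : ℕ → VClause := fun j => insert (nLit (.P u))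
    (((Finset.range (j + 1)).image (fun j' => pLit (.I u j'))) ∪ Body a F.n u) with hTK
  have hntK : ∀ j, Clause.Nontaut (TK j) := by
    intro j
    apply nontaut_sign (fun y => match y with | .P _ => false | _ => true)
    intro l hl
    rcases Finset.mem_insert.1 hl with rfl | hl
    · rfl
    rcases Finset.mem_union.1 hl with hl | hl
    · obtain ⟨j', _, rfl⟩ := Finset.mem_image.1 hl; rfl
    · obtain ⟨i', _, _, rfl⟩ := Body_lits hl; rfl
  have hK0 : Dv G (1 + F.m * 2) (TK 0) := by
    refine Dv.chain (c := 1) (x := fun j => RefVar.I u j) ?_ (fun j _ => hntK j) ?_ ?_ ?_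
    · refine dv_relax hG (memREF_A2 hu) ?_ ?_ (hntK F.m)
      · intro l hl
        exact Finset.mem_insert_of_mem (Finset.mem_union_left _ hl)
      · intro l hl
        obtain ⟨j', _, rfl⟩ := Finset.mem_image.1 hl
        exact Finset.mem_insert_self _ _
    · intro j hj1 hjm
      obtain ⟨l, hlC, hla⟩ := hsat j (Finset.mem_Icc.2 ⟨hj1, hjm⟩)
      have hl1 : l.1 ∈ Finset.Icc 1 F.n :=
        (hWF.1 j (Finset.mem_Icc.2 ⟨hj1, hjm⟩)).2 l hlC
      refine ⟨({nLit (.P u), nLit (.I u j), pLit (.D u l.1 l.2)} : VClause), ?_,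
        by simp [nLit], ?_⟩
      · refine dv_relax hG (memREF_A19 hu (Finset.mem_Icc.2 ⟨hj1, hjm⟩)
          (by rw [show (l.1, l.2) = l from rfl]; exact hlC)) ?_ ?_ ?_
        · intro l' hl'
          simp only [Finset.mem_insert, Finset.mem_singleton] at hl'
          rcases hl' with rfl | rfl <;> simp
        · intro l' hl'
          simp only [Finset.mem_insert, Finset.mem_singleton] at hl'
          rcases hl' with rfl | rfl <;> exact Finset.mem_insert_self _ _
        · apply nontaut_sign (fun y => match y with | .D _ _ _ => true | _ => false)
          intro l' hl'
          simp only [Finset.mem_insert, Finset.mem_singleton] at hl'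
          rcases hl' with rfl | rfl | rfl <;> rfl
      · intro l' hl'
        simp only [Finset.mem_insert, Finset.mem_singleton] at hl'
        rcases hl' with rfl | rfl | rfl
        · exact Finset.mem_insert_of_mem (Finset.mem_insert_self _ _)
        · exact Finset.mem_insert_self _ _
        · refine Finset.mem_insert_of_mem (Finset.mem_insert_of_mem
            (Finset.mem_union_right _ ?_))
          rw [← hla]
          exact Body_mem (Finset.mem_Icc.1 hl1).1 (Finset.mem_Icc.1 hl1).2
    · intro j hj1 hjm
      exact Finset.mem_insert_of_mem (Finset.mem_union_left _
        (Finset.mem_image_of_mem _ (by simp)))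
    · intro j hj1 hjm l hl
      rcases Finset.mem_insert.1 hl with rfl | hl
      · exact Finset.mem_insert_of_mem (Finset.mem_insert_self _ _)
      rcases Finset.mem_union.1 hl with hl | hl
      · obtain ⟨j', hj', rfl⟩ := Finset.mem_image.1 hl
        simp only [Finset.mem_range] at hj'
        rcases eq_or_ne j' j with rfl | hne
        · exact Finset.mem_insert_self _ _
        · refine Finset.mem_insert_of_mem (Finset.mem_insert_of_mem
            (Finset.mem_union_left _ (Finset.mem_image_of_mem _ ?_)))
          simp only [Finset.mem_range]; omega
      · exact Finset.mem_insert_of_mem (Finset.mem_insert_of_mem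
          (Finset.mem_union_right _ hl))
  -- V chain: eliminate V[u,i] for i = n .. 1 using dv_N
  set TV : ℕ → VClause := fun i => insert (nLit (.P u)) (insert (nLit (.I u 0))
    (((Finset.range (i + 1)).image (fun i' => pLit (.V u i'))) ∪ Body a F.n u)) with hTV
  have hntV : ∀ i, Clause.Nontaut (TV i) := by
    intro i
    apply nontaut_sign (fun y => match y with
      | .P _ => false | .I _ _ => false | _ => true)
    intro l hl
    rcases Finset.mem_insert.1 hl with rfl | hl
    · rfl
    rcases Finset.mem_insert.1 hl with rfl | hl
    · rfl
    rcases Finset.mem_union.1 hl with hl | hl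
    · obtain ⟨i', _, rfl⟩ := Finset.mem_image.1 hl; rfl
    · obtain ⟨i', _, _, rfl⟩ := Body_lits hl; rfl
  have hV0 : Dv G (1 + F.n * (s * (8 * F.n + 4) + 4)) (TV 0) := by
    refine Dv.chain (c := s * (8 * F.n + 4) + 3) (x := fun i => RefVar.V u i) ?_
      (fun i _ => hntV i) ?_ ?_ ?_
    · refine dv_relax hG (memREF_A1 hu) ?_ ?_ (hntV F.n)
      · intro l hl
        exact Finset.mem_insert_of_mem (Finset.mem_insert_of_mem (Finset.mem_union_left _ hl))
      · intro l hl
        obtain ⟨i', _, rfl⟩ := Finset.mem_image.1 hl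
        exact Finset.mem_insert_self _ _
    · intro i hi1 hin
      refine ⟨_, dv_N hG a hu (Finset.mem_Icc.2 ⟨hi1, hin⟩) hE, by simp [nLit], ?_⟩
      intro l hl
      simp only [Finset.mem_insert] at hl
      rcases hl with rfl | rfl | rfl | hl
      · exact Finset.mem_insert_of_mem (Finset.mem_insert_self _ _)
      · exact Finset.mem_insert_of_mem (Finset.mem_insert_of_mem (Finset.mem_insert_self _ _))
      · exact Finset.mem_insert_self _ _
      · exact Finset.mem_insert_of_mem (Finset.mem_insert_of_mem (Finset.mem_insert_of_mem
          (Finset.mem_union_right _ hl)))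
    · intro i hi1 hin
      exact Finset.mem_insert_of_mem (Finset.mem_insert_of_mem (Finset.mem_union_left _
        (Finset.mem_image_of_mem _ (by simp))))
    · intro i hi1 hin l hl
      rcases Finset.mem_insert.1 hl with rfl | hl
      · exact Finset.mem_insert_of_mem (Finset.mem_insert_self _ _)
      rcases Finset.mem_insert.1 hl with rfl | hl
      · exact Finset.mem_insert_of_mem (Finset.mem_insert_of_mem (Finset.mem_insert_self _ _))
      rcases Finset.mem_union.1 hl with hl | hl
      · obtain ⟨i', hi', rfl⟩ := Finset.mem_image.1 hl
        simp only [Finset.mem_range] at hi'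
        rcases eq_or_ne i' i with rfl | hne
        · exact Finset.mem_insert_self _ _
        · refine Finset.mem_insert_of_mem (Finset.mem_insert_of_mem
            (Finset.mem_insert_of_mem (Finset.mem_union_left _
              (Finset.mem_image_of_mem _ ?_))))
          simp only [Finset.mem_range]; omega
      · exact Finset.mem_insert_of_mem (Finset.mem_insert_of_mem (Finset.mem_insert_of_mem
          (Finset.mem_union_right _ hl)))
  -- A9 and the two final resolutions
  have hA9 : Dv G 1 ({nLit (.P u), nLit (.I u 0), nLit (.V u 0)} : VClause) := by
    refine dv_relax hG (memREF_A9 hu) ?_ ?_ ?_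
    · intro l hl
      simp only [Finset.mem_insert, Finset.mem_singleton] at hl
      rcases hl with rfl | rfl <;> simp
    · intro l hl
      simp only [Finset.mem_insert, Finset.mem_singleton] at hl
      rcases hl with rfl | rfl <;> simp [nLit, RefVar.idx]
    · apply nontaut_sign (fun _ => false)
      intro l hl
      simp only [Finset.mem_insert, Finset.mem_singleton] at hl
      rcases hl with rfl | rfl | rfl <;> rfl
  set M : VClause := insert (nLit (.P u)) (insert (nLit (.I u 0)) (Body a F.n u)) with hM
  have hntM : Clause.Nontaut M := by
    apply nontaut_sign (fun y => match y with
      | .P _ => false | .I _ _ => false | _ => true)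
    intro l hl
    rcases Finset.mem_insert.1 hl with rfl | hl
    · rfl
    rcases Finset.mem_insert.1 hl with rfl | hl
    · rfl
    · obtain ⟨i', _, _, rfl⟩ := Body_lits hl; rfl
  have hMd : Dv G (1 + F.n * (s * (8 * F.n + 4) + 4) + 1 + 1) M := by
    refine Dv.res (x := RefVar.V u 0) (b := true) hV0 hA9 ?_ ?_ ?_ ?_ hntM
    · exact Finset.mem_insert_of_mem (Finset.mem_insert_of_mem (Finset.mem_union_left _
        (Finset.mem_image_of_mem _ (by simp))))
    · simp [nLit]
    · intro l hl
      rcases Finset.mem_insert.1 hl with rfl | hl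
      · exact Finset.mem_insert_of_mem (Finset.mem_insert_self _ _)
      rcases Finset.mem_insert.1 hl with rfl | hl
      · exact Finset.mem_insert_of_mem (Finset.mem_insert_of_mem (Finset.mem_insert_self _ _))
      rcases Finset.mem_union.1 hl with hl | hl
      · obtain ⟨i', hi', rfl⟩ := Finset.mem_image.1 hl
        simp only [Finset.mem_range] at hi'
        rw [show i' = 0 by omega]
        exact Finset.mem_insert_self _ _
      · exact Finset.mem_insert_of_mem (Finset.mem_insert_of_mem (Finset.mem_insert_of_mem hl))
    · intro l hl
      simp only [Finset.mem_insert, Finset.mem_singleton] at hl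
      rcases hl with rfl | rfl | rfl
      · exact Finset.mem_insert_of_mem (Finset.mem_insert_self _ _)
      · exact Finset.mem_insert_of_mem (Finset.mem_insert_of_mem (Finset.mem_insert_self _ _))
      · exact Finset.mem_insert_self _ _
  refine (Dv.res (x := RefVar.I u 0) (b := false) hMd hK0 ?_ ?_ ?_ ?_
    (Ecl_nontaut a F.n u)).monoK (by ring_nf; omega)
  · simp [hM, nLit]
  · exact Finset.mem_insert_of_mem (Finset.mem_union_left _
      (Finset.mem_image_of_mem _ (by simp)))
  · intro l hl
    rcases Finset.mem_insert.1 hl with rfl | hl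
    · exact Finset.mem_insert_of_mem (Finset.mem_insert_self _ _)
    rcases Finset.mem_insert.1 hl with rfl | hl
    · exact Finset.mem_insert_self _ _
    · exact Finset.mem_insert_of_mem (Finset.mem_insert_of_mem hl)
  · intro l hl
    rcases Finset.mem_insert.1 hl with rfl | hl
    · exact Finset.mem_insert_of_mem (Finset.mem_insert_self _ _)
    rcases Finset.mem_union.1 hl with hl | hl
    · obtain ⟨j', hj', rfl⟩ := Finset.mem_image.1 hl
      simp only [Finset.mem_range] at hj'
      rw [show j' = 0 by omega]
      exact Finset.mem_insert_self _ _
    · exact Finset.mem_insert_of_mem (Finset.mem_insert_of_mem hl)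

end DvE
section DvEnd
variable {F : CNFFam} {s : ℕ} {G : Set VClause} (hG : RREF F s ⊆ G)
include hG

theorem dv_end (a : ℕ → Bool) (hEs : Dv G 1 (Ecl a F.n s)) :
    Dv G (3 + F.n * 4) (∅ : VClause) := by
  have hA24 : Dv G 1 ({pLit (.P s)} : VClause) := by
    refine Dv.ax ?_ ⟨_, hG A24_mem_RREF, subset_rfl⟩
    apply nontaut_sign (fun _ => true)
    intro l hl
    rw [Finset.mem_singleton.1 hl]; rfl
  set T : ℕ → VClause := fun j =>
    (Finset.Icc 1 j).image (fun i => pLit (.D s i (a i))) with hT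
  have hntT : ∀ j, Clause.Nontaut (T j) := by
    intro j
    apply nontaut_sign (fun _ => true)
    intro l hl
    obtain ⟨i', _, rfl⟩ := Finset.mem_image.1 hl; rfl
  have key := Dv.chain (F := G) (c := 3) (B := 3) (N := F.n) (T := T)
    (x := fun j => RefVar.D s j (a j)) ?_ (fun j _ => hntT j) ?_ ?_ ?_
  · have hT0 : T 0 = ∅ := by
      simp [hT, Finset.Icc_eq_empty (by omega : ¬ (1:ℕ) ≤ 0)]
    rw [hT0] at key
    exact key.monoK (by omega)
  · -- B: Body at s
    refine (Dv.res (x := RefVar.P s) (b := true) hA24 hEs ?_ ?_ ?_ ?_ (hntT F.n)).monoK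
      (by omega)
    · simp [pLit]
    · simp [Ecl, nLit]
    · intro l hl
      rw [Finset.mem_singleton.1 hl]
      exact Finset.mem_insert_self _ _
    · intro l hl
      rcases Finset.mem_insert.1 hl with rfl | hl
      · exact Finset.mem_insert_self _ _
      · obtain ⟨i', h1, h2, rfl⟩ := Body_lits hl
        exact Finset.mem_insert_of_mem (Finset.mem_image_of_mem _ (Finset.mem_Icc.2 ⟨h1, h2⟩))
  · -- hQ
    intro j hj1 hjn
    refine ⟨({nLit (.D s j (a j))} : VClause), ?_, by simp [nLit], ?_⟩
    · have hrel : Dv G 1 ({nLit (.P s), nLit (.D s j (a j))} : VClause) := by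
        refine dv_relax hG (memREF_A21 (b := a j) (Finset.mem_Icc.2 ⟨hj1, hjn⟩)) ?_ ?_ ?_
        · intro l hl
          rw [Finset.mem_singleton.1 hl]
          exact Finset.mem_insert_of_mem (Finset.mem_singleton_self _)
        · intro l hl
          rw [Finset.mem_singleton.1 hl]
          exact Finset.mem_insert_self _ _
        · apply nontaut_sign (fun _ => false)
          intro l hl
          simp only [Finset.mem_insert, Finset.mem_singleton] at hl
          rcases hl with rfl | rfl <;> rfl
      refine Dv.res (x := RefVar.P s) (b := true) hA24 hrel ?_ ?_ ?_ ?_ ?_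
      · simp [pLit]
      · simp [nLit]
      · intro l hl
        rw [Finset.mem_singleton.1 hl]
        exact Finset.mem_insert_self _ _
      · intro l hl
        simp only [Finset.mem_insert, Finset.mem_singleton] at hl
        rcases hl with rfl | rfl
        · exact Finset.mem_insert_self _ _
        · exact Finset.mem_insert_of_mem (Finset.mem_singleton_self _)
      · apply nontaut_sign (fun _ => false)
        intro l hl
        rw [Finset.mem_singleton.1 hl]; rfl
    · intro l hl
      rw [Finset.mem_singleton.1 hl]
      exact Finset.mem_insert_self _ _
  · intro j hj1 hjn
    exact Finset.mem_image_of_mem _ (Finset.mem_Icc.2 ⟨hj1, le_rfl⟩)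
  · intro j hj1 hjn l hl
    obtain ⟨i', hi', rfl⟩ := Finset.mem_image.1 hl
    rw [Finset.mem_Icc] at hi'
    rcases eq_or_ne i' j with rfl | hne
    · exact Finset.mem_insert_self _ _
    · exact Finset.mem_insert_of_mem (Finset.mem_image_of_mem _
        (Finset.mem_Icc.2 ⟨hi'.1, by omega⟩))

end DvEnd

/-- Conversion of a `PF` proof to the indexed condition of `IsResRefutation`. -/
theorem PF.toCond {F : Set VClause} {P : List VClause} (h : PF F P) :
    ∀ u : Fin P.length, Clause.Nontaut (P.get u) ∧
      ((∃ C ∈ F, C ⊆ P.get u) ∨ ∃ v w : Fin P.length, (v : ℕ) < (u : ℕ) ∧ (w : ℕ) < (u : ℕ) ∧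
        ∃ x : RefVar, (x, true) ∈ P.get v ∧ (x, false) ∈ P.get w ∧
        ((P.get v).erase (x, true) ∪ (P.get w).erase (x, false)) ⊆ P.get u) := by
  induction h with
  | nil => exact fun u => absurd u.2 (by simp)
  | @ax P₀ C h0 hnt hax ih =>
    intro u
    have hu2 : (u : ℕ) < P₀.length + 1 := by simpa using u.2
    by_cases hu : (u : ℕ) < P₀.length
    · have hg : (P₀ ++ [C]).get u = P₀.get ⟨u, hu⟩ := by
        simp only [List.get_eq_getElem]
        exact List.getElem_append_left hu
      obtain ⟨hnt', hcase⟩ := ih ⟨u, hu⟩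
      rw [hg]
      refine ⟨hnt', ?_⟩
      rcases hcase with hc | ⟨v, w, hv, hw, x, h1, h2, h3⟩
      · exact Or.inl hc
      · refine Or.inr ⟨⟨v, by simp⟩, ⟨w, by simp⟩, hv, hw, x, ?_, ?_, ?_⟩
        · rwa [show (P₀ ++ [C]).get ⟨v, by simp⟩ = P₀.get v from
            List.getElem_append_left v.2]
        · rwa [show (P₀ ++ [C]).get ⟨w, by simp⟩ = P₀.get w from
            List.getElem_append_left w.2]
        · rw [show (P₀ ++ [C]).get ⟨v, by simp⟩ = P₀.get v from
            List.getElem_append_left v.2,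
            show (P₀ ++ [C]).get ⟨w, by simp⟩ = P₀.get w from
            List.getElem_append_left w.2]
          exact h3
    · have hul : (u : ℕ) = P₀.length := by omega
      have hg : (P₀ ++ [C]).get u = C := by
        simp only [List.get_eq_getElem]
        exact List.getElem_concat_length hul _
      rw [hg]
      exact ⟨hnt, Or.inl hax⟩
  | @res P₀ C D₁ D₂ x h0 hnt hm1 hm2 hx1 hx2 hsub ih =>
    intro u
    have hu2 : (u : ℕ) < P₀.length + 1 := by simpa using u.2
    by_cases hu : (u : ℕ) < P₀.length
    · have hg : (P₀ ++ [C]).get u = P₀.get ⟨u, hu⟩ := by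
        simp only [List.get_eq_getElem]
        exact List.getElem_append_left hu
      obtain ⟨hnt', hcase⟩ := ih ⟨u, hu⟩
      rw [hg]
      refine ⟨hnt', ?_⟩
      rcases hcase with hc | ⟨v, w, hv, hw, y, h1, h2, h3⟩
      · exact Or.inl hc
      · refine Or.inr ⟨⟨v, by simp⟩, ⟨w, by simp⟩, hv, hw, y, ?_, ?_, ?_⟩
        · rwa [show (P₀ ++ [C]).get ⟨v, by simp⟩ = P₀.get v from
            List.getElem_append_left v.2]
        · rwa [show (P₀ ++ [C]).get ⟨w, by simp⟩ = P₀.get w from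
            List.getElem_append_left w.2]
        · rw [show (P₀ ++ [C]).get ⟨v, by simp⟩ = P₀.get v from
            List.getElem_append_left v.2,
            show (P₀ ++ [C]).get ⟨w, by simp⟩ = P₀.get w from
            List.getElem_append_left w.2]
          exact h3
    · have hul : (u : ℕ) = P₀.length := by omega
      have hg : (P₀ ++ [C]).get u = C := by
        simp only [List.get_eq_getElem]
        exact List.getElem_concat_length hul _
      rw [hg]
      refine ⟨hnt, ?_⟩
      obtain ⟨v, hv⟩ := List.mem_iff_get.1 hm1
      obtain ⟨w, hw⟩ := List.mem_iff_get.1 hm2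
      refine Or.inr ⟨⟨v, by simp⟩, ⟨w, by simp⟩, by simp [hul, v.2],
        by simp [hul, w.2], x, ?_, ?_, ?_⟩
      · rw [show (P₀ ++ [C]).get ⟨v, by simp⟩ = P₀.get v from
          List.getElem_append_left v.2, hv]
        exact hx1
      · rw [show (P₀ ++ [C]).get ⟨w, by simp⟩ = P₀.get w from
          List.getElem_append_left w.2, hw]
        exact hx2
      · rw [show (P₀ ++ [C]).get ⟨v, by simp⟩ = P₀.get v from
          List.getElem_append_left v.2,
          show (P₀ ++ [C]).get ⟨w, by simp⟩ = P₀.get w from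
          List.getElem_append_left w.2, hv, hw]
        exact hsub
theorem main_bound {F : CNFFam} {s : ℕ} (hWF : F.WF) (hn : 1 ≤ F.n) (hm : 1 ≤ F.m)
    (hs : 1 ≤ s) (hSat : F.Sat) :
    ∃ Prf : List VClause, IsResRefutation (RREF F s) Prf ∧
      Prf.length ≤ 64 * (s * F.n * F.m) ^ 2 := by
  obtain ⟨a, ha⟩ := hSat
  have hsat : ∀ j ∈ Finset.Icc 1 F.m, ∃ l ∈ F.Cl j, a l.1 = l.2 := fun j hj =>
    ha (F.Cl j) ⟨j, hj, rfl⟩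
  set cE := F.n * (s * (8 * F.n + 4) + 4) + 2 * F.m + 6 with hcE
  have ind : ∀ u, u ≤ s → ∃ P : List VClause, PF (RREF F s) P ∧ P.length ≤ u * cE ∧
      ∀ v, 1 ≤ v → v ≤ u → Ecl a F.n v ∈ P := by
    intro u
    induction u with
    | zero => exact fun _ => ⟨[], PF.nil, by simp, by omega⟩
    | succ u ih =>
      intro hu1
      obtain ⟨P, hP, hlen, hmem⟩ := ih (by omega)
      have hG : RREF F s ⊆ RREF F s ∪ {C | C ∈ P} := Set.subset_union_left
      have hEv : ∀ v, 1 ≤ v → v < u + 1 → Dv (RREF F s ∪ {C | C ∈ P}) 1 (Ecl a F.n v) :=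
        fun v h1 h2 => Dv.ax (Ecl_nontaut a F.n v)
          ⟨_, Or.inr (hmem v h1 (by omega)), subset_rfl⟩
      obtain ⟨Q, hQ, hQl, hQm⟩ := dv_E hG a hWF hsat (Finset.mem_Icc.2 ⟨by omega, hu1⟩) hEv
      refine ⟨P ++ Q, PF.append hP hQ, ?_, ?_⟩
      · simp only [List.length_append]
        calc P.length + Q.length ≤ u * cE + cE := by omega
          _ = (u + 1) * cE := by ring
      · intro v h1 h2
        rcases Nat.lt_or_ge v (u + 1) with h | h
        · exact List.mem_append_left _ (hmem v h1 (by omega))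
        · have hv : v = u + 1 := by omega
          subst hv
          exact List.mem_append_right _ hQm
  obtain ⟨P, hP, hlen, hmem⟩ := ind s le_rfl
  have hG : RREF F s ⊆ RREF F s ∪ {C | C ∈ P} := Set.subset_union_left
  have hEs : Dv (RREF F s ∪ {C | C ∈ P}) 1 (Ecl a F.n s) :=
    Dv.ax (Ecl_nontaut a F.n s) ⟨_, Or.inr (hmem s hs le_rfl), subset_rfl⟩
  obtain ⟨Q, hQ, hQl, hQm⟩ := dv_end hG a hEs
  have hPQ : PF (RREF F s) (P ++ Q) := PF.append hP hQ
  have hntEmp : Clause.Nontaut (∅ : VClause) := fun x hx => absurd hx.1 (by simp)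
  have hfull : PF (RREF F s) ((P ++ Q) ++ [(∅ : VClause)]) :=
    hPQ.weakMem (List.mem_append_right _ hQm) (by simp) hntEmp
  refine ⟨(P ++ Q) ++ [(∅ : VClause)], ⟨by simp, hfull.toCond, by
    simp [List.getLast?_append]⟩, ?_⟩
  simp only [List.length_append, List.length_singleton]
  set N := s * F.n * F.m with hN
  have hA : F.n * s ≤ N := by
    calc F.n * s = F.n * s * 1 := by ring
      _ ≤ F.n * s * F.m := Nat.mul_le_mul_left _ hm
      _ = N := by ring
  have hB : s ≤ N := by
    calc s = s * 1 * 1 := by ring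
      _ ≤ s * F.n * F.m := Nat.mul_le_mul (Nat.mul_le_mul_left _ hn) hm
      _ = N := rfl
  have hC : F.n ≤ N := by
    calc F.n = 1 * F.n * 1 := by ring
      _ ≤ s * F.n * F.m := Nat.mul_le_mul (Nat.mul_le_mul_right _ hs) hm
      _ = N := rfl
  have hD : F.m * s ≤ N := by
    calc F.m * s = s * 1 * F.m := by ring
      _ ≤ s * F.n * F.m := Nat.mul_le_mul_right _ (Nat.mul_le_mul_left _ hn)
      _ = N := rfl
  have hE1 : 1 ≤ N := le_trans hs hB
  have key : s * cE + (3 + F.n * 4) + 1 ≤ 64 * N ^ 2 := by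
    have e1 : s * cE = 8 * ((F.n * s) * (F.n * s)) + 4 * ((F.n * s) * s) + 4 * (F.n * s)
        + 2 * (F.m * s) + 6 * s := by rw [hcE]; ring
    have b1 : (F.n * s) * (F.n * s) ≤ N * N := Nat.mul_le_mul hA hA
    have b2 : (F.n * s) * s ≤ N * N := Nat.mul_le_mul hA hB
    have b3 : N ≤ N * N := Nat.le_mul_of_pos_left _ hE1
    have b4 : F.n * s ≤ N * N := le_trans hA b3
    have b5 : F.m * s ≤ N * N := le_trans hD b3
    have b6 : s ≤ N * N := le_trans hB b3
    have b7 : F.n ≤ N * N := le_trans hC b3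
    have b8 : 1 ≤ N * N := le_trans hE1 b3
    have : N ^ 2 = N * N := sq N
    omega
  omega
end RUB

/-- There is a constant `K` such that for all integers `n, m, s ≥ 1` and every satisfiable
CNF `F` with `n` variables and `m` clauses, there is a Resolution refutation of `RREF(F,s)`
of length at most `K·(snm)²`. -/
theorem RREF_upper_bound :
    ∃ K : ℕ, ∀ (F : CNFFam) (s : ℕ), F.WF → 1 ≤ F.n → 1 ≤ F.m → 1 ≤ s → F.Sat →
      ∃ Prf : List VClause, IsResRefutation (RREF F s) Prf ∧
        Prf.length ≤ K * (s * F.n * F.m) ^ 2 := by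
  exact ⟨64, fun F s hWF hn hm hs hSat => RUB.main_bound hWF hn hm hs hSat⟩
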